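/- arXiv:1906.05082 — 7 statements merged into one kernel-verified Lean document; each statement's English description precedes it below -/
import Mathlib

section
/- Under Assumption 1, suppose θ* ∈ ℝ satisfies the balance equation, and define the classifier g* by g*(x,1) = 1{1 ≤ η(x,1)·(2 − θ*/ℙ(Y=1,S=1))} and g*(x,0) = 1{1 ≤ η(x,0)·(2 + θ*/ℙ(Y=1,S=0))}. Then g* is fair and R(g*) ≤ R(g) for every fair classifier g; that is, g* is an optimal Equal Opportunity classifier. -/
open MeasureTheory ProbabilityTheory Set
open scoped symmDiff

/-!
For a classifier `Ŷ`, writing its error set as the symmetric difference `{Ŷ = 1} ∆ {Y = 1}`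
and its true positive rates as `TPRₛ = P(S = s, Y = 1, Ŷ = 1) / pₛ` gives the Lagrangian identity
`R(Ŷ) + θ (TPR₁ - TPR₀) = P(Y = 1) + Σₛ [P(S = s, Ŷ = 1) - Kₛ P(S = s, Y = 1, Ŷ = 1)]`
with `K₁ = 2 - θ / p₁` and `K₀ = 2 + θ / p₀`. Through the regression function the bracket is
`∫_{S = s} (1 - η(X, s) Kₛ) 1{Ŷ = 1}`, which `g*` minimises pointwise because it predicts `1`
exactly where the integrand is nonpositive. The balance equation says `TPR₁(g*) = TPR₀(g*)`, and
for fair classifiers the Lagrange term vanishes, so `R(g*) ≤ R(g)`.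
-/

section Measure

variable {Ω : Type*} [MeasurableSpace Ω] {μ : Measure Ω}

theorem measureReal_setOf_ne_eq [IsFiniteMeasure μ] {a b : Ω → Bool}
    (ha : Measurable a) (hb : Measurable b) :
    μ.real {ω | a ω ≠ b ω} = μ.real {ω | a ω = true} + μ.real {ω | b ω = true}
      - 2 * μ.real ({ω | a ω = true} ∩ {ω | b ω = true}) := by
  have hA : MeasurableSet {ω | a ω = true} := ha (measurableSet_singleton true)
  have hB : MeasurableSet {ω | b ω = true} := hb (measurableSet_singleton true)
  have hsymm : {ω | a ω ≠ b ω} = {ω | a ω = true} ∆ {ω | b ω = true} := by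
    ext ω
    simp only [mem_ofPred_eq, mem_symmDiff]
    cases a ω <;> cases b ω <;> simp
  have hAB := measureReal_sdiff_add_inter (μ := μ) (s := {ω | a ω = true}) hB
  have hBA := measureReal_sdiff_add_inter (μ := μ) (s := {ω | b ω = true}) hA
  rw [inter_comm] at hBA
  rw [hsymm, measureReal_symmDiff_eq hA hB]
  linarith

theorem measureReal_eq_inter_true_add_inter_false [IsFiniteMeasure μ] {S : Ω → Bool}
    (hS : Measurable S) (A : Set Ω) :
    μ.real A = μ.real ({ω | S ω = true} ∩ A) + μ.real ({ω | S ω = false} ∩ A) := by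
  have hfalse : {ω | S ω = false} ∩ A = A \ {ω | S ω = true} := by
    ext ω
    simp [and_comm]
  rw [hfalse, inter_comm]
  exact (measureReal_inter_add_sdiff (hS (measurableSet_singleton true))).symm

theorem toReal_cond_apply {s : Set Ω} (hs : MeasurableSet s) (t : Set Ω) :
    (cond μ s t).toReal = μ.real (s ∩ t) / μ.real s := by
  rw [cond_apply hs, ENNReal.toReal_mul, ENNReal.toReal_inv, div_eq_inv_mul]
  rfl

theorem integral_mul_ite_le_of_iff_nonpos {c : Ω → ℝ} {a b : Ω → Bool} (hc : Integrable c μ)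
    (ha : Measurable a) (hb : Measurable b) (hac : ∀ᵐ ω ∂μ, a ω = true ↔ c ω ≤ 0) :
    ∫ ω, c ω * (if a ω then 1 else 0) ∂μ ≤ ∫ ω, c ω * (if b ω then 1 else 0) ∂μ := by
  have hint : ∀ e : Ω → Bool, Measurable e →
      Integrable (fun ω => c ω * (if e ω then 1 else 0)) μ := fun e he =>
    hc.mul_bdd ((measurable_const.ite (he (measurableSet_singleton true))
      measurable_const).aestronglyMeasurable)
      (ae_of_all _ fun ω => (by split_ifs <;> simp : ‖(if e ω then (1 : ℝ) else 0)‖ ≤ 1))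
  refine integral_mono_ae (hint a ha) (hint b hb) ?_
  filter_upwards [hac] with ω hω
  by_cases hcω : c ω ≤ 0
  · cases b ω <;> simp [hω.2 hcω, hcω]
  · have : a ω = false := by simpa [hcω] using hω
    cases b ω <;> simp [this, (not_le.1 hcω).le]

noncomputable def truePositiveRate (μ : Measure Ω) (S Y Ŷ : Ω → Bool) (s : Bool) : ℝ :=
  (cond μ {ω | S ω = s ∧ Y ω = true} {ω | Ŷ ω = true}).toReal

noncomputable def groupCost (μ : Measure Ω) (S Y Ŷ : Ω → Bool) (s : Bool) (k : ℝ) : ℝ :=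
  μ.real ({ω | S ω = s} ∩ {ω | Ŷ ω = true})
    - k * μ.real ({ω | S ω = s ∧ Y ω = true} ∩ {ω | Ŷ ω = true})

variable {S Y Ŷ : Ω → Bool}

theorem cond_eq_cond_iff_truePositiveRate_eq [IsFiniteMeasure μ] :
    cond μ {ω | S ω = true ∧ Y ω = true} {ω | Ŷ ω = true}
        = cond μ {ω | S ω = false ∧ Y ω = true} {ω | Ŷ ω = true}
      ↔ truePositiveRate μ S Y Ŷ true = truePositiveRate μ S Y Ŷ false :=
  (ENNReal.toReal_eq_toReal_iff' (measure_ne_top _ _) (measure_ne_top _ _)).symm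

theorem measureReal_ne_add_mul_truePositiveRate_sub [IsFiniteMeasure μ] (hS : Measurable S)
    (hY : Measurable Y) (hŶ : Measurable Ŷ) (θ : ℝ) :
    μ.real {ω | Ŷ ω ≠ Y ω}
        + θ * (truePositiveRate μ S Y Ŷ true - truePositiveRate μ S Y Ŷ false)
      = μ.real {ω | Y ω = true}
        + groupCost μ S Y Ŷ true (2 - θ / μ.real {ω | S ω = true ∧ Y ω = true})
        + groupCost μ S Y Ŷ false (2 + θ / μ.real {ω | S ω = false ∧ Y ω = true}) := by
  have hgroup : ∀ s, MeasurableSet {ω | S ω = s ∧ Y ω = true} := fun s =>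
    (hS (measurableSet_singleton s)).inter (hY (measurableSet_singleton true))
  have hslice : ∀ s, {ω | S ω = s} ∩ ({ω | Ŷ ω = true} ∩ {ω | Y ω = true})
      = {ω | S ω = s ∧ Y ω = true} ∩ {ω | Ŷ ω = true} := fun s => by
    ext ω
    simp only [mem_inter_iff, mem_ofPred_eq]
    tauto
  rw [truePositiveRate, truePositiveRate, toReal_cond_apply (hgroup true),
    toReal_cond_apply (hgroup false), groupCost, groupCost, measureReal_setOf_ne_eq hŶ hY,
    measureReal_eq_inter_true_add_inter_false hS {ω | Ŷ ω = true},
    measureReal_eq_inter_true_add_inter_false hS ({ω | Ŷ ω = true} ∩ {ω | Y ω = true}),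
    hslice, hslice]
  ring

end Measure

section Regression

variable {Ω E : Type*} [MeasurableSpace Ω] [MeasurableSpace E]

def IsRegressionFunction (P : Measure Ω) (X : Ω → E) (S Y : Ω → Bool) (η : E → Bool → ℝ) :
    Prop :=
  ∀ φ : E × Bool → ℝ, Measurable φ → (∃ C, ∀ z, |φ z| ≤ C) →
    ∫ ω, (if Y ω then (1:ℝ) else 0) * φ (X ω, S ω) ∂P
      = ∫ ω, η (X ω) (S ω) * φ (X ω, S ω) ∂P

variable {P : Measure Ω} {X : Ω → E} {S Y : Ω → Bool} {η : E → Bool → ℝ}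
  {g : E → Bool → Bool}

theorem IsRegressionFunction.measureReal_inter_eq_setIntegral
    (hreg : IsRegressionFunction P X S Y η) (hX : Measurable X) (hS : Measurable S)
    (hY : Measurable Y) (hg : Measurable fun p : E × Bool => g p.1 p.2) (s : Bool) :
    P.real ({ω | S ω = s ∧ Y ω = true} ∩ {ω | g (X ω) (S ω) = true})
      = ∫ ω in {ω | S ω = s}, η (X ω) s * (if g (X ω) (S ω) then 1 else 0) ∂P := by
  set φ : E × Bool → ℝ := fun p => if p.2 = s ∧ g p.1 p.2 = true then 1 else 0
  have hφ : Measurable φ := Measurable.ite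
    ((measurable_snd (measurableSet_singleton s)).inter (hg (measurableSet_singleton true)))
    measurable_const measurable_const
  have hgroup : MeasurableSet {ω | S ω = s} := hS (measurableSet_singleton s)
  have hslice : MeasurableSet ({ω | S ω = s ∧ Y ω = true} ∩ {ω | g (X ω) (S ω) = true}) :=
    (hgroup.inter (hY (measurableSet_singleton true))).inter
      ((hX.prodMk hS) (hg (measurableSet_singleton true)))
  rw [← integral_indicator_one hslice, ← integral_indicator hgroup]
  calc _ = ∫ ω, (if Y ω then (1:ℝ) else 0) * φ (X ω, S ω) ∂P := by
        refine integral_congr_ae (ae_of_all _ fun ω => ?_)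
        by_cases hω : S ω = s <;> by_cases hYω : Y ω = true <;> simp [φ, hω, hYω, indicator]
    _ = ∫ ω, η (X ω) (S ω) * φ (X ω, S ω) ∂P :=
        hreg φ hφ ⟨1, fun p => by simp only [φ]; split_ifs <;> simp⟩
    _ = _ := by
        refine integral_congr_ae (ae_of_all _ fun ω => ?_)
        by_cases hω : S ω = s <;> simp [φ, hω, indicator]

theorem integrable_comp_of_mem_Icc {μ : Measure Ω} [IsFiniteMeasure μ] (hX : Measurable X)
    (hηm : Measurable fun p : E × Bool => η p.1 p.2) (hη01 : ∀ x s, η x s ∈ Icc (0:ℝ) 1)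
    (s : Bool) : Integrable (fun ω => η (X ω) s) μ :=
  Integrable.of_bound (hηm.comp (hX.prodMk measurable_const)).aestronglyMeasurable 1
    (ae_of_all _ fun ω => by
      obtain ⟨h0, h1⟩ := hη01 (X ω) s
      simp [abs_of_nonneg h0, h1])

theorem IsRegressionFunction.groupCost_eq_setIntegral [IsFiniteMeasure P]
    (hreg : IsRegressionFunction P X S Y η) (hX : Measurable X) (hS : Measurable S)
    (hY : Measurable Y) (hηm : Measurable fun p : E × Bool => η p.1 p.2)
    (hη01 : ∀ x s, η x s ∈ Icc (0:ℝ) 1) (hg : Measurable fun p : E × Bool => g p.1 p.2)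
    (s : Bool) (k : ℝ) :
    groupCost P S Y (fun ω => g (X ω) (S ω)) s k
      = ∫ ω in {ω | S ω = s}, (1 - η (X ω) s * k) * (if g (X ω) (S ω) then 1 else 0) ∂P := by
  have hG : MeasurableSet {ω | g (X ω) (S ω) = true} :=
    (hX.prodMk hS) (hg (measurableSet_singleton true))
  have hGm : AEStronglyMeasurable (fun ω => if g (X ω) (S ω) then (1:ℝ) else 0)
      (P.restrict {ω | S ω = s}) :=
    (Measurable.ite hG measurable_const measurable_const).aestronglyMeasurable
  have hGb : ∀ᵐ ω ∂P.restrict {ω | S ω = s}, ‖if g (X ω) (S ω) then (1:ℝ) else 0‖ ≤ 1 :=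
    ae_of_all _ fun ω => by split_ifs <;> simp
  have hind := Integrable.of_bound hGm 1 hGb
  have hηind := (integrable_comp_of_mem_Icc hX hηm hη01 s).mul_bdd hGm hGb
  have hmass : ∫ ω in {ω | S ω = s}, (if g (X ω) (S ω) then (1:ℝ) else 0) ∂P
      = P.real ({ω | S ω = s} ∩ {ω | g (X ω) (S ω) = true}) := by
    rw [inter_comm, ← measureReal_restrict_apply hG, ← integral_indicator_one hG]
    exact integral_congr_ae (ae_of_all _ fun ω => by simp [indicator])
  simp_rw [sub_mul, one_mul, mul_comm _ k, mul_assoc]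
  rw [integral_sub hind (hηind.const_mul k), integral_const_mul, groupCost, hmass,
    hreg.measureReal_inter_eq_setIntegral hX hS hY hg s]

theorem IsRegressionFunction.groupCost_le_of_forall_iff [IsFiniteMeasure P]
    (hreg : IsRegressionFunction P X S Y η) (hX : Measurable X) (hS : Measurable S)
    (hY : Measurable Y) (hηm : Measurable fun p : E × Bool => η p.1 p.2)
    (hη01 : ∀ x s, η x s ∈ Icc (0:ℝ) 1) {g' : E → Bool → Bool}
    (hg' : Measurable fun p : E × Bool => g' p.1 p.2)
    (hg : Measurable fun p : E × Bool => g p.1 p.2)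
    {s : Bool} {k : ℝ} (hthr : ∀ x, g' x s = true ↔ 1 ≤ η x s * k) :
    groupCost P S Y (fun ω => g' (X ω) (S ω)) s k
      ≤ groupCost P S Y (fun ω => g (X ω) (S ω)) s k := by
  rw [hreg.groupCost_eq_setIntegral hX hS hY hηm hη01 hg',
    hreg.groupCost_eq_setIntegral hX hS hY hηm hη01 hg]
  refine integral_mul_ite_le_of_iff_nonpos
    ((integrable_const 1).sub ((integrable_comp_of_mem_Icc hX hηm hη01 s).mul_const k))
    (hg'.comp (hX.prodMk hS)) (hg.comp (hX.prodMk hS)) ?_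
  refine ae_restrict_of_forall_mem (hS (measurableSet_singleton s)) fun ω (hω : S ω = s) => ?_
  rw [hω, hthr, sub_nonpos]

theorem IsRegressionFunction.integral_cond_div_eq_truePositiveRate [IsFiniteMeasure P]
    (hreg : IsRegressionFunction P X S Y η) (hX : Measurable X) (hS : Measurable S)
    (hY : Measurable Y) (hg : Measurable fun p : E × Bool => g p.1 p.2) {s : Bool} {k : ℝ}
    (hthr : ∀ x, g x s = true ↔ 1 ≤ η x s * k) :
    (∫ ω, η (X ω) s * (if 1 ≤ η (X ω) s * k then 1 else 0) ∂cond P {ω | S ω = s})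
        / (cond P {ω | S ω = s} {ω | Y ω = true}).toReal
      = truePositiveRate P S Y (fun ω => g (X ω) (S ω)) s := by
  have hgroup : MeasurableSet {ω | S ω = s} := hS (measurableSet_singleton s)
  have hnum : ∫ ω, η (X ω) s * (if 1 ≤ η (X ω) s * k then 1 else 0) ∂cond P {ω | S ω = s}
      = (P.real {ω | S ω = s})⁻¹
        * P.real ({ω | S ω = s ∧ Y ω = true} ∩ {ω | g (X ω) (S ω) = true}) := by
    rw [ProbabilityTheory.cond, integral_smul_measure, ENNReal.toReal_inv, smul_eq_mul,
      hreg.measureReal_inter_eq_setIntegral hX hS hY hg s]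
    congr 1
    refine setIntegral_congr_fun hgroup fun ω (hω : S ω = s) => ?_
    simp only [hω, hthr]
  have hgroupY : MeasurableSet {ω | S ω = s ∧ Y ω = true} :=
    hgroup.inter (hY (measurableSet_singleton true))
  rw [hnum, truePositiveRate, toReal_cond_apply hgroup, toReal_cond_apply hgroupY]
  change _ / (P.real {ω | S ω = s ∧ Y ω = true} / _) = _
  rcases eq_or_ne (P.real {ω | S ω = s}) 0 with h0 | h0
  · -- both sides are divisions by zero
    have hp0 : P.real {ω | S ω = s ∧ Y ω = true} = 0 :=
      le_antisymm (h0 ▸ measureReal_mono fun ω h => h.1) measureReal_nonneg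
    simp [h0, hp0]
  · field_simp

theorem measurable_of_forall_iff_one_le_mul (hηm : Measurable fun p : E × Bool => η p.1 p.2)
    (k : Bool → ℝ) (hthr : ∀ x s, g x s = true ↔ 1 ≤ η x s * k s) :
    Measurable fun p : E × Bool => g p.1 p.2 := by
  refine measurable_to_bool ?_
  have hset : (fun p : E × Bool => g p.1 p.2) ⁻¹' {true} = {p | 1 ≤ η p.1 p.2 * k p.2} := by
    ext p
    exact hthr p.1 p.2
  rw [hset]
  exact measurableSet_le measurable_const
    (hηm.mul ((measurable_of_countable k).comp measurable_snd))

end Regression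

theorem stmt_0_general {d : ℕ} {Ω : Type*} [MeasurableSpace Ω]
    (P : Measure Ω) [IsProbabilityMeasure P]
    (X : Ω → (Fin d → ℝ)) (S Y : Ω → Bool)
    (hX : Measurable X) (hS : Measurable S) (hY : Measurable Y)
    (η : (Fin d → ℝ) → Bool → ℝ)
    (hηm : Measurable (fun p : (Fin d → ℝ) × Bool => η p.1 p.2))
    (hη01 : ∀ x s, η x s ∈ Icc (0:ℝ) 1)
    (hreg : ∀ φ : (Fin d → ℝ) × Bool → ℝ, Measurable φ → (∃ C, ∀ z, |φ z| ≤ C) →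
      ∫ ω, (if Y ω then (1:ℝ) else 0) * φ (X ω, S ω) ∂P
        = ∫ ω, η (X ω) (S ω) * φ (X ω, S ω) ∂P)
    -- named quantities
    (p1 p0 q1 q0 : ℝ)
    (hp1 : p1 = (P {ω | Y ω = true ∧ S ω = true}).toReal)
    (hp0 : p0 = (P {ω | Y ω = true ∧ S ω = false}).toReal)
    (hq1 : q1 = (ProbabilityTheory.cond P {ω | S ω = true} {ω | Y ω = true}).toReal)
    (hq0 : q0 = (ProbabilityTheory.cond P {ω | S ω = false} {ω | Y ω = true}).toReal)
    -- θ* satisfying the balance equation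
    (θ : ℝ)
    (hbal :
      (∫ ω, η (X ω) true * (if 1 ≤ η (X ω) true * (2 - θ / p1) then (1:ℝ) else 0)
          ∂(ProbabilityTheory.cond P {ω | S ω = true})) / q1
        = (∫ ω, η (X ω) false * (if 1 ≤ η (X ω) false * (2 + θ / p0) then (1:ℝ) else 0)
          ∂(ProbabilityTheory.cond P {ω | S ω = false})) / q0)
    -- the classifier g*
    (gs : (Fin d → ℝ) → Bool → Bool)
    (hgs1 : ∀ x, gs x true = true ↔ 1 ≤ η x true * (2 - θ / p1))
    (hgs0 : ∀ x, gs x false = true ↔ 1 ≤ η x false * (2 + θ / p0)) :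
    (ProbabilityTheory.cond P {ω | S ω = true ∧ Y ω = true} {ω | gs (X ω) (S ω) = true}
      = ProbabilityTheory.cond P {ω | S ω = false ∧ Y ω = true}
          {ω | gs (X ω) (S ω) = true})
    ∧ ∀ g : (Fin d → ℝ) → Bool → Bool,
        Measurable (fun p : (Fin d → ℝ) × Bool => g p.1 p.2) →
        ProbabilityTheory.cond P {ω | S ω = true ∧ Y ω = true} {ω | g (X ω) (S ω) = true}
          = ProbabilityTheory.cond P {ω | S ω = false ∧ Y ω = true}
              {ω | g (X ω) (S ω) = true} →
        (P {ω | gs (X ω) (S ω) ≠ Y ω}).toReal ≤ (P {ω | g (X ω) (S ω) ≠ Y ω}).toReal := by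
  replace hreg : IsRegressionFunction P X S Y η := hreg
  have hgsm : Measurable fun p : (Fin d → ℝ) × Bool => gs p.1 p.2 :=
    measurable_of_forall_iff_one_le_mul hηm (fun s => if s then 2 - θ / p1 else 2 + θ / p0)
      fun x s => by cases s; exacts [hgs0 x, hgs1 x]
  have hgs_fair : truePositiveRate P S Y (fun ω => gs (X ω) (S ω)) true
      = truePositiveRate P S Y (fun ω => gs (X ω) (S ω)) false := by
    rwa [hq1, hq0, hreg.integral_cond_div_eq_truePositiveRate hX hS hY hgsm hgs1,
      hreg.integral_cond_div_eq_truePositiveRate hX hS hY hgsm hgs0] at hbal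
  refine ⟨cond_eq_cond_iff_truePositiveRate_eq.2 hgs_fair, fun g hg hg_fair => ?_⟩
  have hmass_comm : ∀ s,
      P.real {ω | S ω = s ∧ Y ω = true} = P.real {ω | Y ω = true ∧ S ω = s} :=
    fun s => by simp only [and_comm]
  have hrisk_gs := measureReal_ne_add_mul_truePositiveRate_sub (μ := P)
    (Ŷ := fun ω => gs (X ω) (S ω)) hS hY (hgsm.comp (hX.prodMk hS)) θ
  have hrisk_g := measureReal_ne_add_mul_truePositiveRate_sub (μ := P)
    (Ŷ := fun ω => g (X ω) (S ω)) hS hY (hg.comp (hX.prodMk hS)) θ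
  rw [hgs_fair, sub_self, mul_zero] at hrisk_gs
  rw [cond_eq_cond_iff_truePositiveRate_eq.1 hg_fair, sub_self, mul_zero] at hrisk_g
  simp only [hmass_comm, measureReal_def, ← hp1, ← hp0] at hrisk_gs hrisk_g
  have h1 := hreg.groupCost_le_of_forall_iff hX hS hY hηm hη01 hgsm hg hgs1
  have h0 := hreg.groupCost_le_of_forall_iff hX hS hY hηm hη01 hgsm hg hgs0
  linarith

theorem stmt_0 {d : ℕ} {Ω : Type*} [MeasurableSpace Ω]
    (P : Measure Ω) [IsProbabilityMeasure P]
    (X : Ω → (Fin d → ℝ)) (S Y : Ω → Bool)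
    (hX : Measurable X) (hS : Measurable S) (hY : Measurable Y)
    (hSnd : 0 < P {ω | S ω = true} ∧ P {ω | S ω = true} < 1)
    (hYnd : 0 < P {ω | Y ω = true} ∧ P {ω | Y ω = true} < 1)
    (η : (Fin d → ℝ) → Bool → ℝ)
    (hηm : Measurable (fun p : (Fin d → ℝ) × Bool => η p.1 p.2))
    (hη01 : ∀ x s, η x s ∈ Icc (0:ℝ) 1)
    (hreg : ∀ φ : (Fin d → ℝ) × Bool → ℝ, Measurable φ → (∃ C, ∀ z, |φ z| ≤ C) →
      ∫ ω, (if Y ω then (1:ℝ) else 0) * φ (X ω, S ω) ∂P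
        = ∫ ω, η (X ω) (S ω) * φ (X ω, S ω) ∂P)
    -- Assumption 1
    (hcont : ∀ s : Bool, ContinuousOn
      (fun t : ℝ =>
        (ProbabilityTheory.cond P {ω | S ω = s} {ω | η (X ω) (S ω) ≤ t}).toReal)
      (Ioo (0:ℝ) 1))
    (hhalf : ∀ s : Bool,
      0 < ProbabilityTheory.cond P {ω | S ω = s} {ω | 1 / 2 ≤ η (X ω) s})
    -- named quantities
    (p1 p0 q1 q0 : ℝ)
    (hp1 : p1 = (P {ω | Y ω = true ∧ S ω = true}).toReal)
    (hp0 : p0 = (P {ω | Y ω = true ∧ S ω = false}).toReal)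
    (hq1 : q1 = (ProbabilityTheory.cond P {ω | S ω = true} {ω | Y ω = true}).toReal)
    (hq0 : q0 = (ProbabilityTheory.cond P {ω | S ω = false} {ω | Y ω = true}).toReal)
    -- θ* satisfying the balance equation
    (θ : ℝ)
    (hbal :
      (∫ ω, η (X ω) true * (if 1 ≤ η (X ω) true * (2 - θ / p1) then (1:ℝ) else 0)
          ∂(ProbabilityTheory.cond P {ω | S ω = true})) / q1
        = (∫ ω, η (X ω) false * (if 1 ≤ η (X ω) false * (2 + θ / p0) then (1:ℝ) else 0)
          ∂(ProbabilityTheory.cond P {ω | S ω = false})) / q0)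
    -- the classifier g*
    (gs : (Fin d → ℝ) → Bool → Bool)
    (hgs1 : ∀ x, gs x true = true ↔ 1 ≤ η x true * (2 - θ / p1))
    (hgs0 : ∀ x, gs x false = true ↔ 1 ≤ η x false * (2 + θ / p0)) :
    (ProbabilityTheory.cond P {ω | S ω = true ∧ Y ω = true} {ω | gs (X ω) (S ω) = true}
      = ProbabilityTheory.cond P {ω | S ω = false ∧ Y ω = true}
          {ω | gs (X ω) (S ω) = true})
    ∧ ∀ g : (Fin d → ℝ) → Bool → Bool,
        Measurable (fun p : (Fin d → ℝ) × Bool => g p.1 p.2) →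
        ProbabilityTheory.cond P {ω | S ω = true ∧ Y ω = true} {ω | g (X ω) (S ω) = true}
          = ProbabilityTheory.cond P {ω | S ω = false ∧ Y ω = true}
              {ω | g (X ω) (S ω) = true} →
        (P {ω | gs (X ω) (S ω) ≠ Y ω}).toReal ≤ (P {ω | g (X ω) (S ω) ≠ Y ω}).toReal :=
  stmt_0_general P X S Y hX hS hY η hηm hη01 hreg p1 p0 q1 q0 hp1 hp0 hq1 hq0 θ hbal gs hgs1 hgs0
end

section
/- Let μ be a probability measure on a measurable space, and let h, f, g be measurable functions into [0,1] with ∫ h dμ > 0 and ∫ f dμ > 0. Then |∫ h·g dμ / ∫ h dμ − ∫ f·g dμ / ∫ f dμ| ≤ 2·∫ |h − f| dμ / ∫ h dμ. -/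
open MeasureTheory Set

theorem stmt_7 {α : Type*} [MeasurableSpace α] (μ : Measure α) [IsProbabilityMeasure μ]
    (h f g : α → ℝ) (hhm : Measurable h) (hfm : Measurable f) (hgm : Measurable g)
    (hh01 : ∀ x, h x ∈ Icc (0:ℝ) 1) (hf01 : ∀ x, f x ∈ Icc (0:ℝ) 1)
    (hg01 : ∀ x, g x ∈ Icc (0:ℝ) 1)
    (hhpos : 0 < ∫ x, h x ∂μ) (hfpos : 0 < ∫ x, f x ∂μ) :
    |(∫ x, h x * g x ∂μ) / (∫ x, h x ∂μ) - (∫ x, f x * g x ∂μ) / (∫ x, f x ∂μ)|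
      ≤ 2 * (∫ x, |h x - f x| ∂μ) / (∫ x, h x ∂μ) := by
  have bdd : ∀ (u : α → ℝ), Measurable u → (∀ x, |u x| ≤ 2) → Integrable u μ := by
    intro u hu hb
    exact ⟨hu.aestronglyMeasurable, HasFiniteIntegral.of_bounded (C := 2)
      (ae_of_all μ fun x => by simpa using hb x)⟩
  have abs_le : ∀ (u : α → ℝ), (∀ x, u x ∈ Icc (0:ℝ) 1) → ∀ x, |u x| ≤ 2 := by
    intro u hu x
    have := hu x
    rw [abs_le]; constructor <;> nlinarith [this.1, this.2]
  have ih : Integrable h μ := bdd h hhm (abs_le h hh01)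
  have iff' : Integrable f μ := bdd f hfm (abs_le f hf01)
  have ihg : Integrable (fun x => h x * g x) μ := by
    refine bdd _ (hhm.mul hgm) (fun x => ?_)
    have h1 := hh01 x; have h2 := hg01 x
    rw [abs_mul, abs_of_nonneg h1.1, abs_of_nonneg h2.1]
    nlinarith [h1.1, h1.2, h2.1, h2.2]
  have ifg : Integrable (fun x => f x * g x) μ := by
    refine bdd _ (hfm.mul hgm) (fun x => ?_)
    have h1 := hf01 x; have h2 := hg01 x
    rw [abs_mul, abs_of_nonneg h1.1, abs_of_nonneg h2.1]
    nlinarith [h1.1, h1.2, h2.1, h2.2]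
  have iabs : Integrable (fun x => |h x - f x|) μ := (ih.sub iff').abs
  set A := ∫ x, h x * g x ∂μ with hA
  set B := ∫ x, f x * g x ∂μ with hB
  set H := ∫ x, h x ∂μ with hH
  set F := ∫ x, f x ∂μ with hF
  set D := ∫ x, |h x - f x| ∂μ with hD
  have hDnn : 0 ≤ D := integral_nonneg fun x => abs_nonneg _
  -- |A - B| ≤ D
  have hAB : |A - B| ≤ D := by
    rw [hA, hB, ← integral_sub ihg ifg]
    calc |∫ x, h x * g x - f x * g x ∂μ| ≤ ∫ x, |h x * g x - f x * g x| ∂μ := by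
          simpa [Real.norm_eq_abs] using
            norm_integral_le_integral_norm (fun x => h x * g x - f x * g x) (μ := μ)
      _ ≤ ∫ x, |h x - f x| ∂μ := by
          refine integral_mono_of_nonneg (ae_of_all μ fun x => abs_nonneg _) iabs
            (ae_of_all μ fun x => ?_)
          have h2 := hg01 x
          show |h x * g x - f x * g x| ≤ |h x - f x|
          have heq : h x * g x - f x * g x = (h x - f x) * g x := by ring
          rw [heq, abs_mul]
          calc |h x - f x| * |g x| ≤ |h x - f x| * 1 := by
                exact mul_le_mul_of_nonneg_left (by rw [abs_of_nonneg h2.1]; exact h2.2)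
                  (abs_nonneg _)
            _ = |h x - f x| := mul_one _
  -- |F - H| ≤ D
  have hFH : |F - H| ≤ D := by
    rw [hF, hH, ← integral_sub iff' ih]
    calc |∫ x, f x - h x ∂μ| ≤ ∫ x, |f x - h x| ∂μ := by
          simpa [Real.norm_eq_abs] using
            norm_integral_le_integral_norm (fun x => f x - h x) (μ := μ)
      _ = ∫ x, |h x - f x| ∂μ := by simp [abs_sub_comm]
  -- 0 ≤ B ≤ F
  have hBnn : 0 ≤ B := integral_nonneg fun x => mul_nonneg (hf01 x).1 (hg01 x).1
  have hBF : B ≤ F := by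
    refine integral_mono ifg iff' fun x => ?_
    have h1 := hf01 x; have h2 := hg01 x
    nlinarith [h1.1, h1.2, h2.1, h2.2]
  have hHne : H ≠ 0 := ne_of_gt hhpos
  have hFne : F ≠ 0 := ne_of_gt hfpos
  have key : A / H - B / F = ((A - B) * F + B * (F - H)) / (H * F) := by
    field_simp; ring
  rw [key, abs_div, abs_of_pos (mul_pos hhpos hfpos)]
  rw [div_le_div_iff₀ (mul_pos hhpos hfpos) hhpos]
  have h1 : |(A - B) * F + B * (F - H)| ≤ |A - B| * F + B * |F - H| := by
    calc |(A - B) * F + B * (F - H)| ≤ |(A - B) * F| + |B * (F - H)| := abs_add_le _ _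
      _ = |A - B| * F + B * |F - H| := by
          rw [abs_mul, abs_mul, abs_of_pos hfpos, abs_of_nonneg hBnn]
  calc |(A - B) * F + B * (F - H)| * H ≤ (|A - B| * F + B * |F - H|) * H := by
        exact mul_le_mul_of_nonneg_right h1 hhpos.le
    _ ≤ (D * F + F * D) * H := by
        have : |A - B| * F + B * |F - H| ≤ D * F + F * D := by
          have t1 : |A - B| * F ≤ D * F := mul_le_mul_of_nonneg_right hAB hfpos.le
          have t2 : B * |F - H| ≤ F * D := mul_le_mul hBF hFH (abs_nonneg _) hfpos.le
          linarith
        exact mul_le_mul_of_nonneg_right this hhpos.le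
    _ = 2 * D * (H * F) := by ring
end

section
/- For every α ∈ ℝ and every p ∈ (0,1] there exists a constant C > 0 (depending only on α and p) such that for every integer N ≥ 1, if Z is a binomial random variable with parameters N and p, then 𝔼[(1+Z)^α] ≤ C·(N·p)^α. -/
/-!
Pick an integer `m ≥ 0` with `α + m ≥ 0`. Since `(k+1)⋯(k+m) ≤ m! (1+k)^m`, we get
`(1+k)^α ≤ m! (1+k)^(α+m) / ((k+1)⋯(k+m)) ≤ m! (2N)^(α+m) / ((k+1)⋯(k+m))` for `k ≤ N`.
The identity `C(N,k) (N+1)⋯(N+m) = C(N+m,k+m) (k+1)⋯(k+m)` turns `𝔼[1 / ((Z+1)⋯(Z+m))]`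
into a partial sum of the `Binomial(N+m, p)` law divided by `(N+1)⋯(N+m) p^m ≥ (N p)^m`.
-/

open Finset

theorem Nat.choose_mul_ascFactorial (N k m : ℕ) :
    N.choose k * (N + 1).ascFactorial m = (N + m).choose (k + m) * (k + 1).ascFactorial m := by
  have h := Nat.choose_mul (n := N + m) (Nat.le_add_left m k)
  simp only [Nat.add_sub_cancel] at h
  rw [Nat.ascFactorial_eq_factorial_mul_choose, Nat.ascFactorial_eq_factorial_mul_choose,
    mul_left_comm ((N + m).choose (k + m)), h]
  ring

theorem sum_choose_mul_pow_mul_one_sub_pow (p : ℝ) (n : ℕ) :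
    ∑ j ∈ range (n + 1), (n.choose j : ℝ) * p ^ j * (1 - p) ^ (n - j) = 1 := by
  have h := add_pow p (1 - p) n
  rw [add_sub_cancel, one_pow] at h
  exact (sum_congr rfl fun j _ => by ring).trans h.symm

theorem sum_binomial_div_ascFactorial_le {p : ℝ} (hp0 : 0 < p) (hp1 : p ≤ 1) (N m : ℕ) :
    ∑ k ∈ range (N + 1),
        (N.choose k : ℝ) * p ^ k * (1 - p) ^ (N - k) / (k + 1).ascFactorial m
      ≤ (((N + 1).ascFactorial m : ℝ) * p ^ m)⁻¹ := by
  set g : ℕ → ℝ := fun j => ((N + m).choose j : ℝ) * p ^ j * (1 - p) ^ (N + m - j)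
  have hg : ∀ j, 0 ≤ g j := by
    have : 0 ≤ 1 - p := by linarith
    intro j; simp only [g]; positivity
  have hterm : ∀ k ∈ range (N + 1),
      (N.choose k : ℝ) * p ^ k * (1 - p) ^ (N - k) / (k + 1).ascFactorial m
        = (((N + 1).ascFactorial m : ℝ) * p ^ m)⁻¹ * g (m + k) := by
    intro k _
    have hid : (N.choose k : ℝ) * (N + 1).ascFactorial m
        = (N + m).choose (k + m) * (k + 1).ascFactorial m := by
      exact_mod_cast Nat.choose_mul_ascFactorial N k m
    simp only [g, add_comm m k, Nat.add_sub_add_right, pow_add]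
    field_simp
    linear_combination (1 - p) ^ (N - k) * hid
  have htail : ∑ k ∈ range (N + 1), g (m + k) ≤ 1 := by
    have := sum_choose_mul_pow_mul_one_sub_pow p (N + m)
    rw [show N + m + 1 = m + (N + 1) by omega, sum_range_add] at this
    linarith [sum_nonneg fun j (_ : j ∈ range m) => hg j]
  rw [sum_congr rfl hterm, ← mul_sum]
  exact mul_le_of_le_one_right (by positivity [Nat.ascFactorial_pos N m]) htail

theorem one_add_rpow_le_factorial_mul_rpow_div_ascFactorial (α : ℝ) (m k : ℕ) :
    (1 + k : ℝ) ^ α ≤ m.factorial * (1 + k : ℝ) ^ (α + m) / (k + 1).ascFactorial m := by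
  have hA : (0 : ℝ) < (k + 1).ascFactorial m := by exact_mod_cast Nat.ascFactorial_pos k m
  have hle : ((k + 1).ascFactorial m : ℝ) ≤ m.factorial * (1 + k : ℝ) ^ m := by
    exact_mod_cast (Nat.ascFactorial_le_factorial_mul_pow (k + 1) m).trans_eq (by ring)
  rw [Real.rpow_add_natCast (by positivity), le_div_iff₀ hA]
  calc (1 + k : ℝ) ^ α * (k + 1).ascFactorial m
      ≤ (1 + k : ℝ) ^ α * (m.factorial * (1 + k : ℝ) ^ m) := by gcongr
    _ = _ := by ring

theorem sum_binomial_mul_one_add_rpow_le {α p : ℝ} (hp0 : 0 < p) (hp1 : p ≤ 1) {m : ℕ}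
    (hαm : 0 ≤ α + m) {N : ℕ} (hN : 1 ≤ N) :
    ∑ k ∈ range (N + 1), ((N.choose k : ℝ) * p ^ k * (1 - p) ^ (N - k)) * (1 + (k : ℝ)) ^ α
      ≤ m.factorial * (2 / p) ^ (α + m) * ((N : ℝ) * p) ^ α := by
  have hN1 : (1 : ℝ) ≤ N := by exact_mod_cast hN
  have hpoint : ∀ k ∈ range (N + 1),
      ((N.choose k : ℝ) * p ^ k * (1 - p) ^ (N - k)) * (1 + (k : ℝ)) ^ α
        ≤ m.factorial * (2 * N : ℝ) ^ (α + m) *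
            ((N.choose k : ℝ) * p ^ k * (1 - p) ^ (N - k) / (k + 1).ascFactorial m) := by
    intro k hk
    have hkN : (k : ℝ) ≤ N := by exact_mod_cast Nat.lt_succ_iff.mp (mem_range.mp hk)
    calc _ ≤ ((N.choose k : ℝ) * p ^ k * (1 - p) ^ (N - k)) *
            (m.factorial * (1 + k : ℝ) ^ (α + m) / (k + 1).ascFactorial m) := by
          gcongr; exact one_add_rpow_le_factorial_mul_rpow_div_ascFactorial α m k
      _ ≤ ((N.choose k : ℝ) * p ^ k * (1 - p) ^ (N - k)) *
            (m.factorial * (2 * N : ℝ) ^ (α + m) / (k + 1).ascFactorial m) := by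
          gcongr; linarith
      _ = _ := by ring
  have hasc : (((N + 1).ascFactorial m : ℝ) * p ^ m)⁻¹ ≤ ((N : ℝ) ^ m * p ^ m)⁻¹ := by
    have : (N : ℝ) ^ m ≤ (N + 1).ascFactorial m := by
      exact_mod_cast (Nat.pow_le_pow_left N.le_succ m).trans (Nat.pow_succ_le_ascFactorial _ m)
    gcongr
  calc _ ≤ m.factorial * (2 * N : ℝ) ^ (α + m) *
          ∑ k ∈ range (N + 1),
            (N.choose k : ℝ) * p ^ k * (1 - p) ^ (N - k) / (k + 1).ascFactorial m := by
        rw [mul_sum]; exact sum_le_sum hpoint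
    _ ≤ m.factorial * (2 * N : ℝ) ^ (α + m) * ((N : ℝ) ^ m * p ^ m)⁻¹ := by
        gcongr
        exact (sum_binomial_div_ascFactorial_le hp0 hp1 N m).trans hasc
    _ = _ := by
        rw [show (2 * N : ℝ) = 2 / p * (N * p) by field_simp,
          Real.mul_rpow (by positivity) (by positivity),
          Real.rpow_add_natCast (x := N * p) (by positivity), ← mul_pow]
        field_simp

theorem stmt_11 (α p : ℝ) (hp : p ∈ Set.Ioc (0:ℝ) 1) :
    ∃ C > 0, ∀ N : ℕ, 1 ≤ N →
      ∑ k ∈ Finset.range (N + 1),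
          ((N.choose k : ℝ) * p ^ k * (1 - p) ^ (N - k)) * (1 + (k : ℝ)) ^ α
        ≤ C * ((N : ℝ) * p) ^ α := by
  obtain ⟨hp0, hp1⟩ := hp
  set m := ⌈-α⌉₊
  have hαm : 0 ≤ α + m := by linarith [Nat.le_ceil (-α)]
  exact ⟨m.factorial * (2 / p) ^ (α + m), by positivity,
    fun N hN => sum_binomial_mul_one_add_rpow_le hp0 hp1 hαm hN⟩
end

section
/- Let μ_1, μ_0 be probability measures on ℝ^d, and let h_1, h_0 : ℝ^d → [0,1] be measurable with ∫ h_s dμ_s > 0 and μ_s({x : h_s(x) = t}) = 0 for every t ∈ (0,1], for s ∈ {0,1}. Then for any constants a_1, a_0 > 0 there exists θ ∈ ℝ such that ∫ h_1·1{1 ≤ h_1·(2 − θ/a_1)} dμ_1 / ∫ h_1 dμ_1 = ∫ h_0·1{1 ≤ h_0·(2 + θ/a_0)} dμ_0 / ∫ h_0 dμ_0. -/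
/-!
For fixed `h`, the integrand `h x * 1{1 ≤ h x * c}` is continuous in `c` except where
`h x * c = 1`, i.e. `h x = c⁻¹`; since `h` has no atoms in `(0, 1]` this is a null set, so
dominated convergence makes both sides continuous in `θ`. The left side vanishes at `θ = 2 a₁`
and the right side at `θ = -2 a₀`, and the intermediate value theorem gives a crossing.
-/

open MeasureTheory Set Filter Topology

theorem continuousAt_ite_le_of_ne {X α β : Type*} [TopologicalSpace X] [LinearOrder α]
    [TopologicalSpace α] [OrderClosedTopology α] [TopologicalSpace β] {f : X → α} {x₀ : X}
    {a : α} (b₁ b₂ : β) (hf : ContinuousAt f x₀) (hne : f x₀ ≠ a) :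
    ContinuousAt (fun x => if a ≤ f x then b₁ else b₂) x₀ := by
  rcases hne.lt_or_gt with hlt | hgt
  · refine (continuousAt_const : ContinuousAt (fun _ => b₂) x₀).congr ?_
    filter_upwards [hf.eventually_lt continuousAt_const hlt] with x hx
    simp [not_le.2 hx]
  · refine (continuousAt_const : ContinuousAt (fun _ => b₁) x₀).congr ?_
    filter_upwards [continuousAt_const.eventually_lt hf hgt] with x hx
    simp [hx.le]

theorem exists_eq_of_le_of_ge {f g : ℝ → ℝ} (hf : Continuous f) (hg : Continuous g) {a b : ℝ}
    (ha : f a ≤ g a) (hb : g b ≤ f b) : ∃ θ, f θ = g θ := by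
  have hzero : (0 : ℝ) ∈ uIcc (f a - g a) (f b - g b) :=
    mem_uIcc.2 (Or.inl ⟨sub_nonpos.2 ha, sub_nonneg.2 hb⟩)
  obtain ⟨θ, -, hθ⟩ := intermediate_value_uIcc (hf.sub hg).continuousOn hzero
  exact ⟨θ, sub_eq_zero.1 hθ⟩

section AcceptedFraction

variable {α : Type*} [MeasurableSpace α] {μ : Measure α} {h : α → ℝ}

noncomputable def acceptedFraction (μ : Measure α) (h : α → ℝ) (c : ℝ) : ℝ :=
  (∫ x, h x * (if 1 ≤ h x * c then 1 else 0) ∂μ) / ∫ x, h x ∂μ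

theorem ae_mul_ne_one (h01 : ∀ x, h x ∈ Icc (0 : ℝ) 1)
    (hatom : ∀ t ∈ Ioc (0 : ℝ) 1, μ {x | h x = t} = 0) (c : ℝ) :
    ∀ᵐ x ∂μ, h x * c ≠ 1 := by
  rw [ae_iff]
  simp only [ne_eq, not_not]
  rcases eq_empty_or_nonempty {x | h x * c = 1} with hempty | ⟨x₀, hx₀⟩
  · simp [hempty]
  have hinv : ∀ x ∈ {x | h x * c = 1}, h x = c⁻¹ := fun x hx => eq_inv_of_mul_eq_one_left hx
  have hx₀_ne : h x₀ ≠ 0 := fun h0 => by simp [h0] at hx₀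
  refine measure_mono_null hinv (hatom _ ?_)
  rw [← hinv x₀ hx₀]
  exact ⟨(h01 x₀).1.lt_of_ne' hx₀_ne, (h01 x₀).2⟩

theorem continuous_acceptedFraction [IsFiniteMeasure μ] (hm : Measurable h)
    (h01 : ∀ x, h x ∈ Icc (0 : ℝ) 1) (hatom : ∀ t ∈ Ioc (0 : ℝ) 1, μ {x | h x = t} = 0) :
    Continuous (acceptedFraction μ h) := by
  refine (continuous_iff_continuousAt.2 fun c₀ => ?_).div_const _
  refine continuousAt_of_dominated (bound := fun _ => 1) (Eventually.of_forall fun c => ?_)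
    (Eventually.of_forall fun c => Eventually.of_forall fun x => ?_) (integrable_const 1) ?_
  · exact (hm.mul (Measurable.ite (measurableSet_le measurable_const (hm.mul_const c))
      measurable_const measurable_const)).aestronglyMeasurable
  · rw [norm_mul, Real.norm_of_nonneg (h01 x).1]
    exact mul_le_one₀ (h01 x).2 (norm_nonneg _) (by split_ifs <;> simp)
  · filter_upwards [ae_mul_ne_one h01 hatom c₀] with x hx
    exact continuousAt_const.mul
      (continuousAt_ite_le_of_ne _ _ (continuousAt_const.mul continuousAt_id) hx)

theorem acceptedFraction_zero : acceptedFraction μ h 0 = 0 := by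
  norm_num [acceptedFraction]

theorem acceptedFraction_nonneg (h01 : ∀ x, h x ∈ Icc (0 : ℝ) 1) (c : ℝ) :
    0 ≤ acceptedFraction μ h c :=
  div_nonneg (integral_nonneg fun x => mul_nonneg (h01 x).1 (by split_ifs <;> simp))
    (integral_nonneg fun x => (h01 x).1)

end AcceptedFraction

theorem stmt_12_general {d : ℕ} (μ1 μ0 : Measure (Fin d → ℝ))
    [IsProbabilityMeasure μ1] [IsProbabilityMeasure μ0]
    (h1 h0 : (Fin d → ℝ) → ℝ) (hm1 : Measurable h1) (hm0 : Measurable h0)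
    (h101 : ∀ x, h1 x ∈ Icc (0:ℝ) 1) (h001 : ∀ x, h0 x ∈ Icc (0:ℝ) 1)
    (hatom1 : ∀ t ∈ Ioc (0:ℝ) 1, μ1 {x | h1 x = t} = 0)
    (hatom0 : ∀ t ∈ Ioc (0:ℝ) 1, μ0 {x | h0 x = t} = 0)
    (a1 a0 : ℝ) (ha1 : 0 < a1) (ha0 : 0 < a0) :
    ∃ θ : ℝ,
      (∫ x, h1 x * (if 1 ≤ h1 x * (2 - θ / a1) then (1:ℝ) else 0) ∂μ1) / (∫ x, h1 x ∂μ1)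
        = (∫ x, h0 x * (if 1 ≤ h0 x * (2 + θ / a0) then (1:ℝ) else 0) ∂μ0)
            / (∫ x, h0 x ∂μ0) := by
  refine exists_eq_of_le_of_ge (a := 2 * a1) (b := -(2 * a0))
    (f := fun θ => acceptedFraction μ1 h1 (2 - θ / a1))
    (g := fun θ => acceptedFraction μ0 h0 (2 + θ / a0))
    ((continuous_acceptedFraction hm1 h101 hatom1).comp (by fun_prop))
    ((continuous_acceptedFraction hm0 h001 hatom0).comp (by fun_prop)) ?_ ?_
  · simp only [mul_div_cancel_right₀ _ ha1.ne', sub_self, acceptedFraction_zero]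
    exact acceptedFraction_nonneg h001 _
  · simp only [neg_div, mul_div_cancel_right₀ _ ha0.ne', ← sub_eq_add_neg, sub_self,
      acceptedFraction_zero]
    exact acceptedFraction_nonneg h101 _

theorem stmt_12 {d : ℕ} (μ1 μ0 : Measure (Fin d → ℝ))
    [IsProbabilityMeasure μ1] [IsProbabilityMeasure μ0]
    (h1 h0 : (Fin d → ℝ) → ℝ) (hm1 : Measurable h1) (hm0 : Measurable h0)
    (h101 : ∀ x, h1 x ∈ Icc (0:ℝ) 1) (h001 : ∀ x, h0 x ∈ Icc (0:ℝ) 1)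
    (hpos1 : 0 < ∫ x, h1 x ∂μ1) (hpos0 : 0 < ∫ x, h0 x ∂μ0)
    (hatom1 : ∀ t ∈ Ioc (0:ℝ) 1, μ1 {x | h1 x = t} = 0)
    (hatom0 : ∀ t ∈ Ioc (0:ℝ) 1, μ0 {x | h0 x = t} = 0)
    (a1 a0 : ℝ) (ha1 : 0 < a1) (ha0 : 0 < a0) :
    ∃ θ : ℝ,
      (∫ x, h1 x * (if 1 ≤ h1 x * (2 - θ / a1) then (1:ℝ) else 0) ∂μ1) / (∫ x, h1 x ∂μ1)
        = (∫ x, h0 x * (if 1 ≤ h0 x * (2 + θ / a0) then (1:ℝ) else 0) ∂μ0)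
            / (∫ x, h0 x ∂μ0) :=
  stmt_12_general μ1 μ0 h1 h0 hm1 hm0 h101 h001 hatom1 hatom0 a1 a0 ha1 ha0
end

section
/- Let μ_1, μ_0 and ν_1, ν_0 be probability measures on ℝ^d, let η̂_1, η̂_0 : ℝ^d → [0,1] be measurable with m̂_s := ∫ η̂_s dμ_s > 0 and ∫ η̂_s dν_s > 0 for s ∈ {0,1}, and let p̂_1, p̂_0 > 0. For θ ∈ ℝ define the classifier ĝ_θ by ĝ_θ(x,1) := 1{1 ≤ η̂_1(x)·(2 − θ/p̂_1)} and ĝ_θ(x,0) := 1{1 ≤ η̂_0(x)·(2 + θ/p̂_0)}, and define the empirical unfairness Δ̂(ĝ_θ) := |∫ η̂_1·ĝ_θ(·,1) dν_1 / ∫ η̂_1 dν_1 − ∫ η̂_0·ĝ_θ(·,0) dν_0 / ∫ η̂_0 dν_0|. Then for every θ ∈ ℝ: Δ̂(ĝ_θ) ≤ |∫ η̂_1·ĝ_θ(·,1) dμ_1 / m̂_1 − ∫ η̂_0·ĝ_θ(·,0) dμ_0 / m̂_0| + 2·sup_{t∈[0,1]} |∫ η̂_1·1{t ≤ η̂_1}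 dμ_1 − ∫ η̂_1·1{t ≤ η̂_1} dν_1| / m̂_1 + 2·sup_{t∈[0,1]} |∫ η̂_0·1{t ≤ η̂_0} dμ_0 − ∫ η̂_0·1{t ≤ η̂_0} dν_0| / m̂_0. -/
/-!
Write `A(ρ) := ∫ η·1{1 ≤ η c} dρ` and `N(ρ) := ∫ η dρ`. Since `0 ≤ η ≤ 1`, the event `{1 ≤ η c}`
is empty for `c < 1` and equals `{c⁻¹ ≤ η}` for `c ≥ 1`, so `|A(μ) - A(ν)|` is at most the uniform
deviation `D` of the tail integrals `t ↦ ∫ η·1{t ≤ η}` over `t ∈ [0,1]`; the case `t = 0` gives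
`|N(μ) - N(ν)| ≤ D`. Then
`A(ν)/N(ν) - A(μ)/N(μ) = (A(ν) - A(μ))/N(μ) + (A(ν)/N(ν)) (N(μ) - N(ν))/N(μ)` with `A(ν) ≤ N(ν)`
bounds each group's ratio error by `2D/N(μ)`, and the triangle inequality combines the two groups.
-/

open MeasureTheory Set

lemma abs_div_sub_div_le_two_mul_div {a b a' b' D : ℝ} (ha : 0 ≤ a) (hab : a ≤ b) (hb : 0 < b)
    (hb' : 0 < b') (hda : |a - a'| ≤ D) (hdb : |b' - b| ≤ D) :
    |a / b - a' / b'| ≤ 2 * D / b' := by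
  have hsplit : a / b - a' / b' = (a - a') / b' + a / b * ((b' - b) / b') := by
    field_simp
    ring
  have hratio : a / b ≤ 1 := div_le_one_of_le₀ hab hb.le
  have hD : 0 ≤ D := (abs_nonneg _).trans hda
  rw [hsplit]
  calc |(a - a') / b' + a / b * ((b' - b) / b')|
      ≤ |a - a'| / b' + a / b * (|b' - b| / b') := by
        refine (abs_add_le _ _).trans_eq ?_
        simp only [abs_mul, abs_div, abs_of_pos hb', abs_of_pos hb, abs_of_nonneg ha]
    _ ≤ D / b' + 1 * (D / b') := by gcongr
    _ = 2 * D / b' := by ring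

lemma abs_sub_le_abs_sub_add_add {a b a' b' δ ε : ℝ} (ha : |a - a'| ≤ δ) (hb : |b - b'| ≤ ε) :
    |a - b| ≤ |a' - b'| + δ + ε := by
  have := abs_sub_le a a' b
  have := abs_sub_le a' b' b
  rw [abs_sub_comm b' b] at this
  linarith

section Tail

variable {α : Type*} [MeasurableSpace α] {η : α → ℝ}

noncomputable def tailIntegral (μ : Measure α) (η : α → ℝ) (t : ℝ) : ℝ :=
  ∫ x, η x * (if t ≤ η x then (1 : ℝ) else 0) ∂μ

noncomputable def tailDeviation (μ ν : Measure α) (η : α → ℝ) : ℝ :=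
  ⨆ t ∈ Icc (0 : ℝ) 1, |tailIntegral μ η t - tailIntegral ν η t|

lemma mul_ite_one_zero_mem_Icc {a : ℝ} (ha : a ∈ Icc (0 : ℝ) 1) (p : Prop) [Decidable p] :
    a * (if p then (1 : ℝ) else 0) ∈ Icc (0 : ℝ) 1 := by
  split_ifs <;> simp [ha.1, ha.2]

lemma integral_mem_Icc_of_forall_mem_Icc (μ : Measure α) [IsProbabilityMeasure μ] {f : α → ℝ}
    (hf : ∀ x, f x ∈ Icc (0 : ℝ) 1) : ∫ x, f x ∂μ ∈ Icc (0 : ℝ) 1 :=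
  ⟨integral_nonneg fun x ↦ (hf x).1,
    (integral_mono_of_nonneg (.of_forall fun x ↦ (hf x).1) (integrable_const 1)
      (.of_forall fun x ↦ (hf x).2)).trans_eq (by simp)⟩

variable (hη : ∀ x, η x ∈ Icc (0 : ℝ) 1)
include hη

lemma tailIntegral_mem_Icc (μ : Measure α) [IsProbabilityMeasure μ] (t : ℝ) :
    tailIntegral μ η t ∈ Icc (0 : ℝ) 1 :=
  integral_mem_Icc_of_forall_mem_Icc μ fun x ↦ mul_ite_one_zero_mem_Icc (hη x) _

lemma tailIntegral_zero (μ : Measure α) : tailIntegral μ η 0 = ∫ x, η x ∂μ := by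
  simp only [tailIntegral, if_pos (hη _).1, mul_one]

lemma abs_sub_tailIntegral_le_tailDeviation (μ ν : Measure α) [IsProbabilityMeasure μ]
    [IsProbabilityMeasure ν] {t : ℝ} (ht : t ∈ Icc (0 : ℝ) 1) :
    |tailIntegral μ η t - tailIntegral ν η t| ≤ tailDeviation μ ν η := by
  refine le_ciSup₂ (f := fun t (_ : t ∈ Icc (0 : ℝ) 1) ↦
    |tailIntegral μ η t - tailIntegral ν η t|) ⟨1, ?_⟩ t ht
  rintro _ ⟨_, ⟨s, rfl⟩, ⟨_, rfl⟩⟩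
  have hμ := tailIntegral_mem_Icc hη μ s
  have hν := tailIntegral_mem_Icc hη ν s
  exact abs_sub_le_of_nonneg_of_le hμ.1 hμ.2 hν.1 hν.2

lemma abs_sub_integral_le_tailDeviation (μ ν : Measure α) [IsProbabilityMeasure μ]
    [IsProbabilityMeasure ν] : |∫ x, η x ∂μ - ∫ x, η x ∂ν| ≤ tailDeviation μ ν η := by
  simpa only [tailIntegral_zero hη] using
    abs_sub_tailIntegral_le_tailDeviation hη μ ν (t := 0) (by simp)

lemma abs_sub_thresholdIntegral_le_tailDeviation (μ ν : Measure α) [IsProbabilityMeasure μ]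
    [IsProbabilityMeasure ν] (c : ℝ) :
    |∫ x, η x * (if 1 ≤ η x * c then (1 : ℝ) else 0) ∂ν
      - ∫ x, η x * (if 1 ≤ η x * c then (1 : ℝ) else 0) ∂μ| ≤ tailDeviation μ ν η := by
  by_cases hc : 1 ≤ c
  · have hiff : ∀ x, 1 ≤ η x * c ↔ c⁻¹ ≤ η x := fun x ↦
      (inv_le_iff_one_le_mul₀ (one_pos.trans_le hc)).symm
    simp_rw [hiff]
    rw [abs_sub_comm]
    exact abs_sub_tailIntegral_le_tailDeviation hη μ ν ⟨by positivity, inv_le_one_of_one_le₀ hc⟩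
  · have hempty : ∀ x, ¬ 1 ≤ η x * c := fun x ↦ by
      have := hη x
      rw [not_le] at hc ⊢
      rcases le_or_gt c 0 with hc0 | hc0 <;> nlinarith [this.1, this.2]
    simpa [hempty] using (abs_nonneg _).trans (abs_sub_integral_le_tailDeviation hη μ ν)

lemma abs_thresholdRatio_sub_le (hηm : Measurable η) (μ ν : Measure α) [IsProbabilityMeasure μ]
    [IsProbabilityMeasure ν] (hμ : 0 < ∫ x, η x ∂μ) (hν : 0 < ∫ x, η x ∂ν) (c : ℝ) :
    |(∫ x, η x * (if 1 ≤ η x * c then (1 : ℝ) else 0) ∂ν) / ∫ x, η x ∂ν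
      - (∫ x, η x * (if 1 ≤ η x * c then (1 : ℝ) else 0) ∂μ) / ∫ x, η x ∂μ|
      ≤ 2 * tailDeviation μ ν η / ∫ x, η x ∂μ := by
  have hmass_le : ∫ x, η x * (if 1 ≤ η x * c then (1 : ℝ) else 0) ∂ν ≤ ∫ x, η x ∂ν :=
    integral_mono_of_nonneg (.of_forall fun x ↦ (mul_ite_one_zero_mem_Icc (hη x) _).1)
      (Integrable.of_bound hηm.aestronglyMeasurable 1 (.of_forall fun x ↦ by
        simpa [abs_of_nonneg (hη x).1] using (hη x).2))
      (.of_forall fun x ↦ by dsimp only; split_ifs <;> simp [(hη x).1])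
  exact abs_div_sub_div_le_two_mul_div
    (integral_nonneg fun x ↦ (mul_ite_one_zero_mem_Icc (hη x) _).1) hmass_le hν hμ
    (abs_sub_thresholdIntegral_le_tailDeviation hη μ ν c)
    (abs_sub_integral_le_tailDeviation hη μ ν)

end Tail

theorem stmt_13_general {d : ℕ}
    (μ1 μ0 ν1 ν0 : Measure (Fin d → ℝ))
    [IsProbabilityMeasure μ1] [IsProbabilityMeasure μ0]
    [IsProbabilityMeasure ν1] [IsProbabilityMeasure ν0]
    (ηh1 ηh0 : (Fin d → ℝ) → ℝ) (hηh1m : Measurable ηh1) (hηh0m : Measurable ηh0)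
    (hηh101 : ∀ x, ηh1 x ∈ Icc (0:ℝ) 1) (hηh001 : ∀ x, ηh0 x ∈ Icc (0:ℝ) 1)
    (mh1 mh0 : ℝ) (hmh1 : mh1 = ∫ x, ηh1 x ∂μ1) (hmh0 : mh0 = ∫ x, ηh0 x ∂μ0)
    (hmh1pos : 0 < mh1) (hmh0pos : 0 < mh0)
    (hν1pos : 0 < ∫ x, ηh1 x ∂ν1) (hν0pos : 0 < ∫ x, ηh0 x ∂ν0)
    (ph1 ph0 : ℝ) :
    ∀ θ : ℝ,
      |(∫ x, ηh1 x * (if 1 ≤ ηh1 x * (2 - θ / ph1) then (1:ℝ) else 0) ∂ν1)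
            / (∫ x, ηh1 x ∂ν1)
        - (∫ x, ηh0 x * (if 1 ≤ ηh0 x * (2 + θ / ph0) then (1:ℝ) else 0) ∂ν0)
            / (∫ x, ηh0 x ∂ν0)|
      ≤ |(∫ x, ηh1 x * (if 1 ≤ ηh1 x * (2 - θ / ph1) then (1:ℝ) else 0) ∂μ1) / mh1
          - (∫ x, ηh0 x * (if 1 ≤ ηh0 x * (2 + θ / ph0) then (1:ℝ) else 0) ∂μ0) / mh0|
        + 2 * (⨆ t ∈ Icc (0:ℝ) 1,
            |(∫ x, ηh1 x * (if t ≤ ηh1 x then (1:ℝ) else 0) ∂μ1)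
              - (∫ x, ηh1 x * (if t ≤ ηh1 x then (1:ℝ) else 0) ∂ν1)|) / mh1
        + 2 * (⨆ t ∈ Icc (0:ℝ) 1,
            |(∫ x, ηh0 x * (if t ≤ ηh0 x then (1:ℝ) else 0) ∂μ0)
              - (∫ x, ηh0 x * (if t ≤ ηh0 x then (1:ℝ) else 0) ∂ν0)|) / mh0 := by
  intro θ
  subst hmh1 hmh0
  exact abs_sub_le_abs_sub_add_add
    (abs_thresholdRatio_sub_le hηh101 hηh1m μ1 ν1 hmh1pos hν1pos (2 - θ / ph1))
    (abs_thresholdRatio_sub_le hηh001 hηh0m μ0 ν0 hmh0pos hν0pos (2 + θ / ph0))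

theorem stmt_13 {d : ℕ}
    (μ1 μ0 ν1 ν0 : Measure (Fin d → ℝ))
    [IsProbabilityMeasure μ1] [IsProbabilityMeasure μ0]
    [IsProbabilityMeasure ν1] [IsProbabilityMeasure ν0]
    (ηh1 ηh0 : (Fin d → ℝ) → ℝ) (hηh1m : Measurable ηh1) (hηh0m : Measurable ηh0)
    (hηh101 : ∀ x, ηh1 x ∈ Icc (0:ℝ) 1) (hηh001 : ∀ x, ηh0 x ∈ Icc (0:ℝ) 1)
    (mh1 mh0 : ℝ) (hmh1 : mh1 = ∫ x, ηh1 x ∂μ1) (hmh0 : mh0 = ∫ x, ηh0 x ∂μ0)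
    (hmh1pos : 0 < mh1) (hmh0pos : 0 < mh0)
    (hν1pos : 0 < ∫ x, ηh1 x ∂ν1) (hν0pos : 0 < ∫ x, ηh0 x ∂ν0)
    (ph1 ph0 : ℝ) (hph1 : 0 < ph1) (hph0 : 0 < ph0) :
    ∀ θ : ℝ,
      |(∫ x, ηh1 x * (if 1 ≤ ηh1 x * (2 - θ / ph1) then (1:ℝ) else 0) ∂ν1)
            / (∫ x, ηh1 x ∂ν1)
        - (∫ x, ηh0 x * (if 1 ≤ ηh0 x * (2 + θ / ph0) then (1:ℝ) else 0) ∂ν0)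
            / (∫ x, ηh0 x ∂ν0)|
      ≤ |(∫ x, ηh1 x * (if 1 ≤ ηh1 x * (2 - θ / ph1) then (1:ℝ) else 0) ∂μ1) / mh1
          - (∫ x, ηh0 x * (if 1 ≤ ηh0 x * (2 + θ / ph0) then (1:ℝ) else 0) ∂μ0) / mh0|
        + 2 * (⨆ t ∈ Icc (0:ℝ) 1,
            |(∫ x, ηh1 x * (if t ≤ ηh1 x then (1:ℝ) else 0) ∂μ1)
              - (∫ x, ηh1 x * (if t ≤ ηh1 x then (1:ℝ) else 0) ∂ν1)|) / mh1
        + 2 * (⨆ t ∈ Icc (0:ℝ) 1,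
            |(∫ x, ηh0 x * (if t ≤ ηh0 x then (1:ℝ) else 0) ∂μ0)
              - (∫ x, ηh0 x * (if t ≤ ηh0 x then (1:ℝ) else 0) ∂ν0)|) / mh0 :=
  stmt_13_general μ1 μ0 ν1 ν0 ηh1 ηh0 hηh1m hηh0m hηh101 hηh001 mh1 mh0 hmh1 hmh0 hmh1pos hmh0pos
    hν1pos hν0pos ph1 ph0
end

section
/- Let h : ℝ^d × {0,1} → [0,1] be measurable, let b_s := ℙ(S=s), and suppose m_s := E_{X|S=s}[h(X,s)] > 0 for s ∈ {0,1}. Given θ ∈ ℝ define the classifier g_θ by g_θ(x,1) := 1{b_1(2h(x,1)−1) − θ·h(x,1)/m_1 ≥ 0} and g_θ(x,0) := 1{b_0(2h(x,0)−1) + θ·h(x,0)/m_0 ≥ 0}. If E_{X|S=1}[h(X,1)·g_θ(X,1)]/m_1 = E_{X|S=0}[h(X,0)·g_θ(X,0)]/m_0, then 𝔼_{(X,S)}[(2h(X,S)−1)·g_θ(X,S)] = E_{X|S=1}[(b_1(2h(X,1)−1) − θ·h(X,1)/m_1)₊] + E_{X|S=0}[(b_0(2h(X,0)−1) + θ·h(X,0)/m_0)₊].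 -/
/-!
Conditioning on `S` writes the accuracy as `b₁ E₁[(2h - 1) g] + b₀ E₀[(2h - 1) g]`. Since
`g(·, s)` is the indicator of the set where the score `b_s (2h - 1) ∓ θ h / m_s` is nonnegative,
the positive part of the score equals the score times `g`, so
`E_s[score₊] = b_s E_s[(2h - 1) g] ∓ θ E_s[h g] / m_s`. The balance condition makes the two
`θ`-terms cancel.
-/

open MeasureTheory ProbabilityTheory Set

section

variable {Ω : Type*} [MeasurableSpace Ω]

theorem integral_apply_eq_sum_smul_integral_cond {α E : Type*} [Fintype α] [MeasurableSpace α]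
    [DiscreteMeasurableSpace α] [NormedAddCommGroup E] [NormedSpace ℝ E] {μ : Measure Ω}
    [IsFiniteMeasure μ] {X : Ω → α} (hX : Measurable X) {F : Ω → α → E}
    (hF : Integrable (fun ω => F ω (X ω)) μ) :
    ∫ ω, F ω (X ω) ∂μ = ∑ x, (μ {ω | X ω = x}).toReal • ∫ ω, F ω x ∂μ[|{ω | X ω = x}] := by
  conv_lhs => rw [← sum_meas_smul_cond_fiber hX μ]
  rw [integral_finsetSum_measure]
  · refine Finset.sum_congr rfl fun x _ => ?_
    rw [integral_smul_measure]
    congr 1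
    exact integral_congr_ae <| (ae_cond_mem (hX (.singleton x))).mono fun ω hω =>
      congrArg (F ω) hω
  · rw [← integrable_finsetSum_measure, sum_meas_smul_cond_fiber hX μ]
    exact hF

theorem integral_max_zero_eq_of_iff {μ : Measure Ω} {a u v : Ω → ℝ} {p : Ω → Prop}
    [DecidablePred p] {b c : ℝ} (ha : ∀ ω, a ω = b * u ω + c * v ω)
    (hp : ∀ ω, p ω ↔ 0 ≤ a ω)
    (hu : Integrable (fun ω => u ω * if p ω then 1 else 0) μ)
    (hv : Integrable (fun ω => v ω * if p ω then 1 else 0) μ) :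
    ∫ ω, max (a ω) 0 ∂μ =
      b * ∫ ω, u ω * (if p ω then 1 else 0) ∂μ + c * ∫ ω, v ω * (if p ω then 1 else 0) ∂μ := by
  have hmax : ∀ ω, max (a ω) 0 =
      b * (u ω * if p ω then 1 else 0) + c * (v ω * if p ω then 1 else 0) := fun ω => by
    by_cases hpω : p ω
    · rw [max_eq_left ((hp ω).1 hpω), if_pos hpω, ha]; ring
    · rw [max_eq_right (not_le.1 (mt (hp ω).2 hpω)).le, if_neg hpω]; ring
  simp_rw [hmax]
  rw [integral_add (hu.const_mul b) (hv.const_mul c), integral_const_mul, integral_const_mul]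

theorem integrable_mul_ite_of_abs_le {μ : Measure Ω} [IsFiniteMeasure μ] {f : Ω → ℝ}
    {p : Ω → Bool} (hf : Measurable f) (hp : Measurable p) {C : ℝ} (hC : ∀ ω, |f ω| ≤ C) :
    Integrable (fun ω => f ω * if p ω then 1 else 0) μ := by
  have hind : Measurable fun ω => if p ω then (1:ℝ) else 0 :=
    (measurable_of_countable fun b : Bool => if b then (1:ℝ) else 0).comp hp
  refine .of_bound (hf.mul hind).aestronglyMeasurable C (ae_of_all _ fun ω => ?_)
  cases p ω
  · simpa using (abs_nonneg _).trans (hC ω)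
  · simpa using hC ω

end

theorem measurable_bool_of_iff_nonneg {α : Type*} [MeasurableSpace α] {g : α → Bool}
    {φ : α → ℝ} (hφ : Measurable φ) (hg : ∀ x, g x = true ↔ 0 ≤ φ x) : Measurable g :=
  measurable_to_bool <| (Set.ext hg : g ⁻¹' {true} = {x | 0 ≤ φ x}) ▸
    measurableSet_le measurable_const hφ

theorem stmt_15_general {d : ℕ} {Ω : Type*} [MeasurableSpace Ω]
    (P : Measure Ω) [IsProbabilityMeasure P]
    (X : Ω → (Fin d → ℝ)) (S : Ω → Bool)
    (hX : Measurable X) (hS : Measurable S)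
    (h : (Fin d → ℝ) → Bool → ℝ)
    (hhm : Measurable (fun p : (Fin d → ℝ) × Bool => h p.1 p.2))
    (hh01 : ∀ x s, h x s ∈ Icc (0:ℝ) 1)
    (b1 b0 m1 m0 : ℝ)
    (hb1 : b1 = (P {ω | S ω = true}).toReal)
    (hb0 : b0 = (P {ω | S ω = false}).toReal)
    (θ : ℝ)
    (g : (Fin d → ℝ) → Bool → Bool)
    (hg1 : ∀ x, g x true = true ↔ 0 ≤ b1 * (2 * h x true - 1) - θ * h x true / m1)
    (hg0 : ∀ x, g x false = true ↔ 0 ≤ b0 * (2 * h x false - 1) + θ * h x false / m0)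
    (hbal :
      (∫ ω, h (X ω) true * (if g (X ω) true then (1:ℝ) else 0)
          ∂(ProbabilityTheory.cond P {ω | S ω = true})) / m1
        = (∫ ω, h (X ω) false * (if g (X ω) false then (1:ℝ) else 0)
          ∂(ProbabilityTheory.cond P {ω | S ω = false})) / m0) :
    ∫ ω, (2 * h (X ω) (S ω) - 1) * (if g (X ω) (S ω) then (1:ℝ) else 0) ∂P
      = (∫ ω, max (b1 * (2 * h (X ω) true - 1) - θ * h (X ω) true / m1) 0
            ∂(ProbabilityTheory.cond P {ω | S ω = true}))
        + (∫ ω, max (b0 * (2 * h (X ω) false - 1) + θ * h (X ω) false / m0) 0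
            ∂(ProbabilityTheory.cond P {ω | S ω = false})) := by
  have hgm : Measurable fun p : (Fin d → ℝ) × Bool => g p.1 p.2 :=
    measurable_from_prod_countable_left fun s => by
      cases s
      exacts [measurable_bool_of_iff_nonneg (by fun_prop) hg0,
        measurable_bool_of_iff_nonneg (by fun_prop) hg1]
  have hintegrable : ∀ (μ : Measure Ω) [IsFiniteMeasure μ] (T : Ω → Bool), Measurable T →
      Integrable (fun ω => (2 * h (X ω) (T ω) - 1) * if g (X ω) (T ω) then (1:ℝ) else 0) μ ∧
      Integrable (fun ω => h (X ω) (T ω) * if g (X ω) (T ω) then (1:ℝ) else 0) μ := by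
    intro μ _ T hT
    have hhT : Measurable fun ω => h (X ω) (T ω) := hhm.comp (hX.prodMk hT)
    have hgT : Measurable fun ω => g (X ω) (T ω) := hgm.comp (hX.prodMk hT)
    refine ⟨integrable_mul_ite_of_abs_le (C := 1) ((hhT.const_mul 2).sub_const 1) hgT fun ω => ?_,
      integrable_mul_ite_of_abs_le (C := 1) hhT hgT fun ω => ?_⟩ <;>
    · obtain ⟨h0, h1⟩ := hh01 (X ω) (T ω)
      rw [abs_le]
      constructor <;> linarith
  have hdecomp := integral_apply_eq_sum_smul_integral_cond
    (F := fun ω s => (2 * h (X ω) s - 1) * if g (X ω) s then (1:ℝ) else 0) hS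
    (hintegrable P S hS).1
  simp only [Fintype.sum_bool, smul_eq_mul] at hdecomp
  rw [hdecomp,
    integral_max_zero_eq_of_iff (b := b1) (c := -(θ / m1)) (fun _ => by ring) (fun ω => hg1 (X ω))
      (hintegrable _ (fun _ => true) measurable_const).1
      (hintegrable _ (fun _ => true) measurable_const).2,
    integral_max_zero_eq_of_iff (b := b0) (c := θ / m0) (fun _ => by ring) (fun ω => hg0 (X ω))
      (hintegrable _ (fun _ => false) measurable_const).1
      (hintegrable _ (fun _ => false) measurable_const).2]
  subst hb1 hb0
  linear_combination θ * hbal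

theorem stmt_15 {d : ℕ} {Ω : Type*} [MeasurableSpace Ω]
    (P : Measure Ω) [IsProbabilityMeasure P]
    (X : Ω → (Fin d → ℝ)) (S : Ω → Bool)
    (hX : Measurable X) (hS : Measurable S)
    (hSnd : 0 < P {ω | S ω = true} ∧ P {ω | S ω = true} < 1)
    (h : (Fin d → ℝ) → Bool → ℝ)
    (hhm : Measurable (fun p : (Fin d → ℝ) × Bool => h p.1 p.2))
    (hh01 : ∀ x s, h x s ∈ Icc (0:ℝ) 1)
    (b1 b0 m1 m0 : ℝ)
    (hb1 : b1 = (P {ω | S ω = true}).toReal)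
    (hb0 : b0 = (P {ω | S ω = false}).toReal)
    (hm1 : m1 = ∫ ω, h (X ω) true ∂(ProbabilityTheory.cond P {ω | S ω = true}))
    (hm0 : m0 = ∫ ω, h (X ω) false ∂(ProbabilityTheory.cond P {ω | S ω = false}))
    (hm1pos : 0 < m1) (hm0pos : 0 < m0)
    (θ : ℝ)
    (g : (Fin d → ℝ) → Bool → Bool)
    (hg1 : ∀ x, g x true = true ↔ 0 ≤ b1 * (2 * h x true - 1) - θ * h x true / m1)
    (hg0 : ∀ x, g x false = true ↔ 0 ≤ b0 * (2 * h x false - 1) + θ * h x false / m0)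
    (hbal :
      (∫ ω, h (X ω) true * (if g (X ω) true then (1:ℝ) else 0)
          ∂(ProbabilityTheory.cond P {ω | S ω = true})) / m1
        = (∫ ω, h (X ω) false * (if g (X ω) false then (1:ℝ) else 0)
          ∂(ProbabilityTheory.cond P {ω | S ω = false})) / m0) :
    ∫ ω, (2 * h (X ω) (S ω) - 1) * (if g (X ω) (S ω) then (1:ℝ) else 0) ∂P
      = (∫ ω, max (b1 * (2 * h (X ω) true - 1) - θ * h (X ω) true / m1) 0
            ∂(ProbabilityTheory.cond P {ω | S ω = true}))
        + (∫ ω, max (b0 * (2 * h (X ω) false - 1) + θ * h (X ω) false / m0) 0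
            ∂(ProbabilityTheory.cond P {ω | S ω = false})) :=
  stmt_15_general P X S hX hS h hhm hh01 b1 b0 m1 m0 hb1 hb0 θ g hg1 hg0 hbal
end

section
/- Assume Assumption 1 and set b_s := ℙ(S=s), m_s := E_{X|S=s}[η(X,s)]. Suppose θ* ∈ ℝ both satisfies the balance equation for η and minimizes over λ ∈ ℝ the function φ_η(λ) := E_{X|S=1}[(b_1(2η(X,1)−1) − λ·η(X,1)/m_1)₊] + E_{X|S=0}[(b_0(2η(X,0)−1) + λ·η(X,0)/m_0)₊], and let g* be the associated threshold classifier g*(x,1) = 1{b_1(2η(x,1)−1) − θ*·η(x,1)/m_1 ≥ 0}, g*(x,0) = 1{b_0(2η(x,0)−1) + θ*·η(x,0)/m_0 ≥ 0}. Let η̂ : ℝ^d × {0,1} → [0,1] be measurable with m̂_s := E_{X|S=s}[η̂(X,s)] > 0, suppose θ̃ ∈ ℝ with |θ̃| ≤ 2 satisfies the analogous balance equation for η̂, and let g̃ be the associated threshold classifier g̃(x,1) = 1{b_1(2η̂(x,1)−1) − θ̃·η̂(x,1)/m̂_1 ≥ 0}, g̃(x,0) = 1{b_0(2η̂(x,0)−1)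 + θ̃·η̂(x,0)/m̂_0 ≥ 0}. Then R(g̃) − R(g*) ≤ 4·𝔼_{(X,S)}|η̂(X,S) − η(X,S)| + 4·E_{X|S=1}|η(X,1) − η̂(X,1)|/m_1 + 4·E_{X|S=0}|η(X,0) − η̂(X,0)|/m_0. -/
/-!
Write `R(g) = 𝔼 η + 𝔼[(1 - 2η) g]` and split the second expectation over the two groups. Because
`g*` thresholds the score `b_s(2η - 1) ∓ θ* η / m_s`, its group parts add up to `-φ_η(θ*)` plus the
terms `± θ* E_s[η g*] / m_s`, which cancel by the balance equation. The same computation for `g̃`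
gives `-φ_η̂(θ̃)` up to an error `2 𝔼|η - η̂|`. Minimality of `θ*` gives `φ_η(θ*) ≤ φ_η(θ̃)`, and
`φ_η(θ̃) - φ_η̂(θ̃)` is small because `(·)₊` is 1-Lipschitz and the normalized regression functions
are close: `E_s|η/m_s - η̂/m̂_s| ≤ 2 E_s|η - η̂| / m_s`.
-/

open MeasureTheory ProbabilityTheory Set

section Threshold

variable {Ω : Type*} [MeasurableSpace Ω] {μ : Measure Ω}

lemma measurable_ind {G : Ω → Bool} (hG : Measurable G) :
    Measurable fun ω => if G ω then (1 : ℝ) else 0 :=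
  Measurable.ite (hG (measurableSet_singleton true)) measurable_const measurable_const

lemma MeasureTheory.Integrable.mul_comp_bool {f : Ω → ℝ} {G : Ω → Bool} (hf : Integrable f μ)
    (hG : Measurable G) (φ : Bool → ℝ) : Integrable (fun ω => f ω * φ (G ω)) μ :=
  hf.mul_bdd ((measurable_of_countable φ).comp hG).aestronglyMeasurable
    (ae_of_all _ fun ω => show ‖φ (G ω)‖ ≤ max |φ true| |φ false| by cases G ω <;> simp)

lemma MeasureTheory.Integrable.mul_ind {f : Ω → ℝ} {G : Ω → Bool} (hf : Integrable f μ)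
    (hG : Measurable G) :
    Integrable (fun ω => f ω * if G ω then (1 : ℝ) else 0) μ :=
  hf.mul_comp_bool hG fun b => if b then 1 else 0

lemma measurable_of_iff_nonneg {u : Ω → ℝ} {G : Ω → Bool} (hu : Measurable u)
    (hG : ∀ ω, G ω = true ↔ 0 ≤ u ω) : Measurable G :=
  measurable_to_bool <| by
    rw [show G ⁻¹' {true} = {ω | 0 ≤ u ω} from Set.ext hG]
    exact measurableSet_le measurable_const hu

lemma integral_mul_ind_eq_integral_max {u : Ω → ℝ} {G : Ω → Bool}
    (hG : ∀ ω, G ω = true ↔ 0 ≤ u ω) :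
    ∫ ω, u ω * (if G ω then (1 : ℝ) else 0) ∂μ = ∫ ω, max (u ω) 0 ∂μ := by
  congr 1 with ω
  by_cases hu : 0 ≤ u ω
  · simp [(hG ω).2 hu, hu]
  · simp [mt (hG ω).1 hu, (not_le.1 hu).le]

lemma integral_abs_div_sub_div_le {e h : Ω → ℝ} {m mh : ℝ} (he : Integrable e μ)
    (hh : Integrable h μ) (hh0 : ∀ ω, 0 ≤ h ω) (hm : m = ∫ ω, e ω ∂μ) (hmh : mh = ∫ ω, h ω ∂μ)
    (hm0 : 0 < m) (hmh0 : 0 < mh) :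
    ∫ ω, |e ω / m - h ω / mh| ∂μ ≤ 2 * (∫ ω, |e ω - h ω| ∂μ) / m := by
  have hpt : ∀ ω, |e ω / m - h ω / mh| ≤ |e ω - h ω| / m + |mh - m| / (m * mh) * h ω := by
    intro ω
    have hsplit : e ω / m - h ω / mh = (e ω - h ω) / m + (mh - m) / (m * mh) * h ω := by
      field_simp; ring
    rw [hsplit]
    refine (abs_add_le _ _).trans_eq ?_
    rw [abs_div, abs_of_pos hm0, abs_mul, abs_div, abs_of_pos (mul_pos hm0 hmh0),
      abs_of_nonneg (hh0 ω)]
  have hmass : |mh - m| ≤ ∫ ω, |e ω - h ω| ∂μ := by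
    rw [hm, hmh, ← integral_sub hh he]
    refine abs_integral_le_integral_abs.trans_eq (integral_congr_ae (ae_of_all _ fun ω => ?_))
    exact abs_sub_comm _ _
  calc ∫ ω, |e ω / m - h ω / mh| ∂μ
      ≤ ∫ ω, (|e ω - h ω| / m + |mh - m| / (m * mh) * h ω) ∂μ :=
        integral_mono (by fun_prop) (by fun_prop) hpt
    _ = (∫ ω, |e ω - h ω| ∂μ) / m + |mh - m| / m := by
        rw [integral_add (by fun_prop) (by fun_prop), integral_div, integral_const_mul, ← hmh]
        field_simp
    _ ≤ 2 * (∫ ω, |e ω - h ω| ∂μ) / m := by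
        rw [two_mul, add_div]; gcongr

variable [IsFiniteMeasure μ]

lemma integrable_ind {G : Ω → Bool} (hG : Measurable G) :
    Integrable (fun ω => if G ω then (1 : ℝ) else 0) μ :=
  .of_mem_Icc 0 1 (measurable_ind hG).aemeasurable
    (ae_of_all _ fun ω => by cases G ω <;> simp)

lemma mul_integral_one_sub_two_mul_ind_eq {e : Ω → ℝ} {G : Ω → Bool} {b t m : ℝ}
    (he : Integrable e μ) (hGm : Measurable G)
    (hG : ∀ ω, G ω = true ↔ 0 ≤ b * (2 * e ω - 1) - t * e ω / m) :
    b * ∫ ω, (1 - 2 * e ω) * (if G ω then (1 : ℝ) else 0) ∂μ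
      = -∫ ω, max (b * (2 * e ω - 1) - t * e ω / m) 0 ∂μ
        - t / m * ∫ ω, e ω * (if G ω then (1 : ℝ) else 0) ∂μ := by
  have hpt : ∀ ω, b * ((1 - 2 * e ω) * (if G ω then (1 : ℝ) else 0))
      = -((b * (2 * e ω - 1) - t * e ω / m) * (if G ω then (1 : ℝ) else 0))
        - t / m * (e ω * (if G ω then (1 : ℝ) else 0)) := fun ω => by ring
  rw [← integral_const_mul, integral_congr_ae (ae_of_all _ hpt), integral_sub, integral_neg,
    integral_const_mul, integral_mul_ind_eq_integral_max hG]
  · exact (Integrable.mul_ind (by fun_prop) hGm).neg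
  · exact (he.mul_ind hGm).const_mul _

lemma integral_one_sub_two_mul_ind_le {e h : Ω → ℝ} {T : Ω → Bool} (he : Integrable e μ)
    (hh : Integrable h μ) (hTm : Measurable T) :
    ∫ ω, (1 - 2 * e ω) * (if T ω then (1 : ℝ) else 0) ∂μ
      ≤ ∫ ω, (1 - 2 * h ω) * (if T ω then (1 : ℝ) else 0) ∂μ + 2 * ∫ ω, |e ω - h ω| ∂μ := by
  have hTe : Integrable (fun ω => (1 - 2 * e ω) * if T ω then (1 : ℝ) else 0) μ :=
    Integrable.mul_ind (by fun_prop) hTm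
  have hTh : Integrable (fun ω => (1 - 2 * h ω) * if T ω then (1 : ℝ) else 0) μ :=
    Integrable.mul_ind (by fun_prop) hTm
  rw [← integral_const_mul, ← integral_add hTh (by fun_prop)]
  refine integral_mono hTe (hTh.add (by fun_prop)) fun ω => ?_
  split_ifs <;> linarith [neg_abs_le (e ω - h ω), abs_nonneg (e ω - h ω)]

lemma integral_max_score_le {e h : Ω → ℝ} {b t m mh : ℝ} (he : Integrable e μ)
    (hh : Integrable h μ) (hh0 : ∀ ω, 0 ≤ h ω) (hm : m = ∫ ω, e ω ∂μ) (hmh : mh = ∫ ω, h ω ∂μ)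
    (hm0 : 0 < m) (hmh0 : 0 < mh) (hb : 0 ≤ b) :
    ∫ ω, max (b * (2 * e ω - 1) - t * e ω / m) 0 ∂μ
      ≤ ∫ ω, max (b * (2 * h ω - 1) - t * h ω / mh) 0 ∂μ + 2 * b * ∫ ω, |e ω - h ω| ∂μ
        + |t| * (2 * (∫ ω, |e ω - h ω| ∂μ) / m) := by
  have hpt : ∀ ω, max (b * (2 * e ω - 1) - t * e ω / m) 0
      ≤ max (b * (2 * h ω - 1) - t * h ω / mh) 0
        + (2 * b * |e ω - h ω| + |t| * |e ω / m - h ω / mh|) := by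
    intro ω
    have hmax := abs_max_sub_max_le_abs (b * (2 * e ω - 1) - t * e ω / m)
      (b * (2 * h ω - 1) - t * h ω / mh) 0
    have hdiff : (b * (2 * e ω - 1) - t * e ω / m) - (b * (2 * h ω - 1) - t * h ω / mh)
        = 2 * b * (e ω - h ω) - t * (e ω / m - h ω / mh) := by ring
    rw [hdiff] at hmax
    have hsub := abs_sub (2 * b * (e ω - h ω)) (t * (e ω / m - h ω / mh))
    rw [abs_mul (2 * b), abs_mul t, abs_of_nonneg (by positivity : 0 ≤ 2 * b)] at hsub
    linarith [le_abs_self (max (b * (2 * e ω - 1) - t * e ω / m) 0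
      - max (b * (2 * h ω - 1) - t * h ω / mh) 0)]
  calc ∫ ω, max (b * (2 * e ω - 1) - t * e ω / m) 0 ∂μ
      ≤ ∫ ω, (max (b * (2 * h ω - 1) - t * h ω / mh) 0
          + (2 * b * |e ω - h ω| + |t| * |e ω / m - h ω / mh|)) ∂μ :=
        integral_mono (by fun_prop) (by fun_prop) hpt
    _ = ∫ ω, max (b * (2 * h ω - 1) - t * h ω / mh) 0 ∂μ + 2 * b * ∫ ω, |e ω - h ω| ∂μ
          + |t| * ∫ ω, |e ω / m - h ω / mh| ∂μ := by
        rw [integral_add (by fun_prop) (by fun_prop), integral_add (by fun_prop) (by fun_prop),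
          integral_const_mul, integral_const_mul, add_assoc]
    _ ≤ _ := by
        gcongr
        exact integral_abs_div_sub_div_le he hh hh0 hm hmh hm0 hmh0

/-- The last two terms cancel against those of the other group by the balance equations. -/
theorem excess_on_group_le {e h : Ω → ℝ} {G T : Ω → Bool} {b m mh ts tt : ℝ}
    (he : Integrable e μ) (hh : Integrable h μ) (hh0 : ∀ ω, 0 ≤ h ω) (hm : m = ∫ ω, e ω ∂μ)
    (hmh : mh = ∫ ω, h ω ∂μ) (hm0 : 0 < m) (hmh0 : 0 < mh) (hb : 0 ≤ b) (htt : |tt| ≤ 2)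
    (hG : ∀ ω, G ω = true ↔ 0 ≤ b * (2 * e ω - 1) - ts * e ω / m)
    (hT : ∀ ω, T ω = true ↔ 0 ≤ b * (2 * h ω - 1) - tt * h ω / mh)
    (hGm : Measurable G) (hTm : Measurable T) :
    b * ∫ ω, (1 - 2 * e ω) * (if T ω then (1 : ℝ) else 0) ∂μ
        - b * ∫ ω, (1 - 2 * e ω) * (if G ω then (1 : ℝ) else 0) ∂μ
      ≤ ∫ ω, max (b * (2 * e ω - 1) - ts * e ω / m) 0 ∂μ
        - ∫ ω, max (b * (2 * e ω - 1) - tt * e ω / m) 0 ∂μ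
        + 4 * b * ∫ ω, |e ω - h ω| ∂μ + 4 * (∫ ω, |e ω - h ω| ∂μ) / m
        + ts / m * ∫ ω, e ω * (if G ω then (1 : ℝ) else 0) ∂μ
        - tt / mh * ∫ ω, h ω * (if T ω then (1 : ℝ) else 0) ∂μ := by
  have hGeq := mul_integral_one_sub_two_mul_ind_eq he hGm hG
  have hTeq := mul_integral_one_sub_two_mul_ind_eq hh hTm hT
  have hswap := mul_le_mul_of_nonneg_left (integral_one_sub_two_mul_ind_le he hh hTm) hb
  have hphi := integral_max_score_le (t := tt) he hh hh0 hm hmh hm0 hmh0 hb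
  have herr : |tt| * (2 * (∫ ω, |e ω - h ω| ∂μ) / m) ≤ 2 * (2 * (∫ ω, |e ω - h ω| ∂μ) / m) :=
    mul_le_mul_of_nonneg_right htt
      (div_nonneg (mul_nonneg zero_le_two (integral_nonneg fun _ => abs_nonneg _)) hm0.le)
  linear_combination hswap + hphi + herr - hGeq + hTeq

end Threshold

section Risk

variable {Ω : Type*} [MeasurableSpace Ω] {P : Measure Ω} [IsFiniteMeasure P]

lemma toReal_mul_integral_cond (A : Set Ω) (f : Ω → ℝ) :
    (P A).toReal * ∫ ω, f ω ∂P[|A] = ∫ ω in A, f ω ∂P := by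
  rcases eq_or_ne (P A) 0 with hA | hA
  · simp [Measure.restrict_eq_zero.2 hA, hA]
  · rw [ProbabilityTheory.cond, integral_smul_measure, ENNReal.toReal_inv, smul_eq_mul,
      mul_inv_cancel_left₀ (ENNReal.toReal_ne_zero.2 ⟨hA, measure_ne_top P A⟩)]

lemma integral_eq_cond_add_cond {S : Ω → Bool} (hS : Measurable S) {F : Ω → Bool → ℝ}
    (hF : Integrable (fun ω => F ω (S ω)) P) :
    ∫ ω, F ω (S ω) ∂P
      = (P {ω | S ω = true}).toReal * ∫ ω, F ω true ∂P[|{ω | S ω = true}]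
        + (P {ω | S ω = false}).toReal * ∫ ω, F ω false ∂P[|{ω | S ω = false}] := by
  have hA : MeasurableSet {ω | S ω = true} := hS (measurableSet_singleton true)
  have hAc : {ω | S ω = true}ᶜ = {ω | S ω = false} := by ext; simp
  rw [toReal_mul_integral_cond, toReal_mul_integral_cond, ← hAc, ← integral_add_compl hA hF]
  congr 1
  · exact setIntegral_congr_fun hA fun ω (hω : S ω = true) => by rw [hω]
  · refine setIntegral_congr_fun hA.compl fun ω hω => ?_
    rw [hAc] at hω
    rw [show S ω = false from hω]

lemma toReal_measure_ne_eq {G Y : Ω → Bool} {p : Ω → ℝ} (hG : Measurable G) (hY : Measurable Y)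
    (hp : Integrable p P)
    (hreg : ∫ ω, (if Y ω then (1 : ℝ) else 0) * (1 - 2 * if G ω then (1 : ℝ) else 0) ∂P
      = ∫ ω, p ω * (1 - 2 * if G ω then (1 : ℝ) else 0) ∂P) :
    (P {ω | G ω ≠ Y ω}).toReal
      = ∫ ω, p ω ∂P + ∫ ω, (1 - 2 * p ω) * (if G ω then (1 : ℝ) else 0) ∂P := by
  have hind : ∀ ω, {ω | G ω ≠ Y ω}.indicator 1 ω = (if G ω then (1 : ℝ) else 0)
      + (if Y ω then (1 : ℝ) else 0) * (1 - 2 * if G ω then (1 : ℝ) else 0) := by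
    intro ω
    simp only [indicator_apply, mem_ofPred_eq, Pi.one_apply]
    cases G ω <;> cases Y ω <;> norm_num
  have hpt : ∀ ω, (if G ω then (1 : ℝ) else 0) + p ω * (1 - 2 * if G ω then (1 : ℝ) else 0)
      = p ω + (1 - 2 * p ω) * (if G ω then (1 : ℝ) else 0) := fun ω => by ring
  have hYG := (integrable_ind hY (μ := P)).mul_comp_bool hG fun b => 1 - 2 * if b then 1 else 0
  have hpG := hp.mul_comp_bool hG fun b => 1 - 2 * if b then 1 else 0
  have hne : MeasurableSet {ω | G ω ≠ Y ω} := (measurableSet_eq_fun hG hY).compl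
  rw [← measureReal_def, ← integral_indicator_one hne,
    integral_congr_ae (ae_of_all _ hind),
    integral_add (integrable_ind hG) hYG, hreg, ← integral_add (integrable_ind hG) hpG,
    integral_congr_ae (ae_of_all _ hpt),
    integral_add hp (Integrable.mul_ind (by fun_prop) hG)]

end Risk

section Classifier

variable {Ω E : Type*} [MeasurableSpace Ω] [MeasurableSpace E] {P : Measure Ω} [IsFiniteMeasure P]
  {X : Ω → E} {S Y : Ω → Bool} {η : E → Bool → ℝ}

lemma risk_eq_cond (hX : Measurable X) (hS : Measurable S) (hY : Measurable Y)
    (hηm : Measurable (fun p : E × Bool => η p.1 p.2)) (hη01 : ∀ x s, η x s ∈ Icc (0 : ℝ) 1)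
    (hreg : ∀ φ : E × Bool → ℝ, Measurable φ → (∃ C, ∀ z, |φ z| ≤ C) →
      ∫ ω, (if Y ω then (1 : ℝ) else 0) * φ (X ω, S ω) ∂P
        = ∫ ω, η (X ω) (S ω) * φ (X ω, S ω) ∂P)
    {g : E → Bool → Bool} (hg : ∀ s, Measurable fun x => g x s) :
    (P {ω | g (X ω) (S ω) ≠ Y ω}).toReal
      = ∫ ω, η (X ω) (S ω) ∂P
        + ((P {ω | S ω = true}).toReal * ∫ ω, (1 - 2 * η (X ω) true)
            * (if g (X ω) true then (1 : ℝ) else 0) ∂P[|{ω | S ω = true}]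
          + (P {ω | S ω = false}).toReal * ∫ ω, (1 - 2 * η (X ω) false)
            * (if g (X ω) false then (1 : ℝ) else 0) ∂P[|{ω | S ω = false}]) := by
  have hgm : Measurable fun z : E × Bool => g z.1 z.2 := measurable_from_prod_countable_left hg
  have hG : Measurable fun ω => g (X ω) (S ω) := hgm.comp (hX.prodMk hS)
  have hη : Integrable (fun ω => η (X ω) (S ω)) P :=
    .of_mem_Icc 0 1 (by fun_prop) (ae_of_all _ fun _ => hη01 _ _)
  have hφ : Measurable fun z : E × Bool => 1 - 2 * if g z.1 z.2 then (1 : ℝ) else 0 := by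
    have := measurable_ind hgm
    fun_prop
  rw [toReal_measure_ne_eq hG hY hη (hreg _ hφ ⟨1, fun z => by split <;> norm_num⟩)]
  exact congrArg _ (integral_eq_cond_add_cond hS
    (F := fun ω s => (1 - 2 * η (X ω) s) * if g (X ω) s then 1 else 0)
    (((integrable_const 1).sub (hη.const_mul 2)).mul_ind hG))

end Classifier

theorem stmt_17_general {d : ℕ} {Ω : Type*} [MeasurableSpace Ω]
    (P : Measure Ω) [IsProbabilityMeasure P]
    (X : Ω → (Fin d → ℝ)) (S Y : Ω → Bool)
    (hX : Measurable X) (hS : Measurable S) (hY : Measurable Y)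
    (η : (Fin d → ℝ) → Bool → ℝ)
    (hηm : Measurable (fun p : (Fin d → ℝ) × Bool => η p.1 p.2))
    (hη01 : ∀ x s, η x s ∈ Icc (0:ℝ) 1)
    (hreg : ∀ φ : (Fin d → ℝ) × Bool → ℝ, Measurable φ → (∃ C, ∀ z, |φ z| ≤ C) →
      ∫ ω, (if Y ω then (1:ℝ) else 0) * φ (X ω, S ω) ∂P
        = ∫ ω, η (X ω) (S ω) * φ (X ω, S ω) ∂P)
    -- named quantities
    (b1 b0 m1 m0 : ℝ)
    (hb1 : b1 = (P {ω | S ω = true}).toReal)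
    (hb0 : b0 = (P {ω | S ω = false}).toReal)
    (hm1 : m1 = ∫ ω, η (X ω) true ∂(ProbabilityTheory.cond P {ω | S ω = true}))
    (hm0 : m0 = ∫ ω, η (X ω) false ∂(ProbabilityTheory.cond P {ω | S ω = false}))
    (hm1pos : 0 < m1) (hm0pos : 0 < m0)
    -- θ* and the optimal classifier g*
    (θs : ℝ)
    (gstar : (Fin d → ℝ) → Bool → Bool)
    (hgstar1 : ∀ x, gstar x true = true
      ↔ 0 ≤ b1 * (2 * η x true - 1) - θs * η x true / m1)
    (hgstar0 : ∀ x, gstar x false = true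
      ↔ 0 ≤ b0 * (2 * η x false - 1) + θs * η x false / m0)
    (hbalstar :
      (∫ ω, η (X ω) true * (if gstar (X ω) true then (1:ℝ) else 0)
          ∂(ProbabilityTheory.cond P {ω | S ω = true})) / m1
        = (∫ ω, η (X ω) false * (if gstar (X ω) false then (1:ℝ) else 0)
          ∂(ProbabilityTheory.cond P {ω | S ω = false})) / m0)
    (hminstar : ∀ lam : ℝ,
      (∫ ω, max (b1 * (2 * η (X ω) true - 1) - θs * η (X ω) true / m1) 0
          ∂(ProbabilityTheory.cond P {ω | S ω = true}))
        + (∫ ω, max (b0 * (2 * η (X ω) false - 1) + θs * η (X ω) false / m0) 0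
          ∂(ProbabilityTheory.cond P {ω | S ω = false}))
      ≤ (∫ ω, max (b1 * (2 * η (X ω) true - 1) - lam * η (X ω) true / m1) 0
          ∂(ProbabilityTheory.cond P {ω | S ω = true}))
        + (∫ ω, max (b0 * (2 * η (X ω) false - 1) + lam * η (X ω) false / m0) 0
          ∂(ProbabilityTheory.cond P {ω | S ω = false})))
    -- the estimator and the pseudo-oracle
    (ηh : (Fin d → ℝ) → Bool → ℝ)
    (hηhm : Measurable (fun p : (Fin d → ℝ) × Bool => ηh p.1 p.2))
    (hηh01 : ∀ x s, ηh x s ∈ Icc (0:ℝ) 1)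
    (mh1 mh0 : ℝ)
    (hmh1 : mh1 = ∫ ω, ηh (X ω) true ∂(ProbabilityTheory.cond P {ω | S ω = true}))
    (hmh0 : mh0 = ∫ ω, ηh (X ω) false ∂(ProbabilityTheory.cond P {ω | S ω = false}))
    (hmh1pos : 0 < mh1) (hmh0pos : 0 < mh0)
    (θt : ℝ) (hθt : |θt| ≤ 2)
    (gtil : (Fin d → ℝ) → Bool → Bool)
    (hgtil1 : ∀ x, gtil x true = true
      ↔ 0 ≤ b1 * (2 * ηh x true - 1) - θt * ηh x true / mh1)
    (hgtil0 : ∀ x, gtil x false = true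
      ↔ 0 ≤ b0 * (2 * ηh x false - 1) + θt * ηh x false / mh0)
    (hbaltil :
      (∫ ω, ηh (X ω) true * (if gtil (X ω) true then (1:ℝ) else 0)
          ∂(ProbabilityTheory.cond P {ω | S ω = true})) / mh1
        = (∫ ω, ηh (X ω) false * (if gtil (X ω) false then (1:ℝ) else 0)
          ∂(ProbabilityTheory.cond P {ω | S ω = false})) / mh0) :
    (P {ω | gtil (X ω) (S ω) ≠ Y ω}).toReal - (P {ω | gstar (X ω) (S ω) ≠ Y ω}).toReal
      ≤ 4 * (∫ ω, |ηh (X ω) (S ω) - η (X ω) (S ω)| ∂P)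
        + 4 * (∫ ω, |η (X ω) true - ηh (X ω) true|
            ∂(ProbabilityTheory.cond P {ω | S ω = true})) / m1
        + 4 * (∫ ω, |η (X ω) false - ηh (X ω) false|
            ∂(ProbabilityTheory.cond P {ω | S ω = false})) / m0 := by
  have hgstar : ∀ s, Measurable fun x => gstar x s := Bool.forall_bool.2
    ⟨measurable_of_iff_nonneg (by fun_prop) hgstar0, measurable_of_iff_nonneg (by fun_prop) hgstar1⟩
  have hgtil : ∀ s, Measurable fun x => gtil x s := Bool.forall_bool.2
    ⟨measurable_of_iff_nonneg (by fun_prop) hgtil0, measurable_of_iff_nonneg (by fun_prop) hgtil1⟩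
  have hInt (f : (Fin d → ℝ) → Bool → ℝ) (hf : Measurable fun p : (Fin d → ℝ) × Bool => f p.1 p.2)
      (hf01 : ∀ x s, f x s ∈ Icc (0 : ℝ) 1) (s : Bool) (μ : Measure Ω) [IsFiniteMeasure μ] :
      Integrable (fun ω => f (X ω) s) μ :=
    .of_mem_Icc 0 1 (by fun_prop) (ae_of_all _ fun _ => hf01 _ _)
  have h1 := excess_on_group_le (hInt η hηm hη01 true _) (hInt ηh hηhm hηh01 true _)
    (fun _ => (hηh01 _ _).1) hm1 hmh1 hm1pos hmh1pos (hb1 ▸ ENNReal.toReal_nonneg) hθt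
    (fun ω => hgstar1 (X ω)) (fun ω => hgtil1 (X ω)) ((hgstar true).comp hX) ((hgtil true).comp hX)
  have h0 := excess_on_group_le (G := fun ω => gstar (X ω) false) (T := fun ω => gtil (X ω) false)
    (ts := -θs) (tt := -θt) (hInt η hηm hη01 false _) (hInt ηh hηhm hηh01 false _)
    (fun _ => (hηh01 _ _).1) hm0 hmh0 hm0pos hmh0pos (hb0 ▸ ENNReal.toReal_nonneg)
    (by rwa [abs_neg])
    (fun ω => by simpa only [neg_mul, neg_div, sub_neg_eq_add] using hgstar0 (X ω))
    (fun ω => by simpa only [neg_mul, neg_div, sub_neg_eq_add] using hgtil0 (X ω))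
    ((hgstar false).comp hX) ((hgtil false).comp hX)
  simp only [neg_mul, neg_div, sub_neg_eq_add] at h0
  have hηXS : Integrable (fun ω => η (X ω) (S ω)) P :=
    .of_mem_Icc 0 1 (by fun_prop) (ae_of_all _ fun _ => hη01 _ _)
  have hηhXS : Integrable (fun ω => ηh (X ω) (S ω)) P :=
    .of_mem_Icc 0 1 (by fun_prop) (ae_of_all _ fun _ => hηh01 _ _)
  have hD := integral_eq_cond_add_cond hS (F := fun ω s => |η (X ω) s - ηh (X ω) s|)
    (hηXS.sub hηhXS).abs
  simp only [abs_sub_comm (ηh _ _)]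
  rw [risk_eq_cond hX hS hY hηm hη01 hreg hgtil, risk_eq_cond hX hS hY hηm hη01 hreg hgstar, hD,
    ← hb1, ← hb0]
  linear_combination h1 + h0 + hminstar θt + θs * hbalstar - θt * hbaltil

theorem stmt_17 {d : ℕ} {Ω : Type*} [MeasurableSpace Ω]
    (P : Measure Ω) [IsProbabilityMeasure P]
    (X : Ω → (Fin d → ℝ)) (S Y : Ω → Bool)
    (hX : Measurable X) (hS : Measurable S) (hY : Measurable Y)
    (hSnd : 0 < P {ω | S ω = true} ∧ P {ω | S ω = true} < 1)
    (hYnd : 0 < P {ω | Y ω = true} ∧ P {ω | Y ω = true} < 1)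
    (η : (Fin d → ℝ) → Bool → ℝ)
    (hηm : Measurable (fun p : (Fin d → ℝ) × Bool => η p.1 p.2))
    (hη01 : ∀ x s, η x s ∈ Icc (0:ℝ) 1)
    (hreg : ∀ φ : (Fin d → ℝ) × Bool → ℝ, Measurable φ → (∃ C, ∀ z, |φ z| ≤ C) →
      ∫ ω, (if Y ω then (1:ℝ) else 0) * φ (X ω, S ω) ∂P
        = ∫ ω, η (X ω) (S ω) * φ (X ω, S ω) ∂P)
    -- Assumption 1
    (hcont : ∀ s : Bool, ContinuousOn
      (fun t : ℝ =>
        (ProbabilityTheory.cond P {ω | S ω = s} {ω | η (X ω) (S ω) ≤ t}).toReal)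
      (Ioo (0:ℝ) 1))
    (hhalf : ∀ s : Bool,
      0 < ProbabilityTheory.cond P {ω | S ω = s} {ω | 1 / 2 ≤ η (X ω) s})
    -- named quantities
    (b1 b0 m1 m0 : ℝ)
    (hb1 : b1 = (P {ω | S ω = true}).toReal)
    (hb0 : b0 = (P {ω | S ω = false}).toReal)
    (hm1 : m1 = ∫ ω, η (X ω) true ∂(ProbabilityTheory.cond P {ω | S ω = true}))
    (hm0 : m0 = ∫ ω, η (X ω) false ∂(ProbabilityTheory.cond P {ω | S ω = false}))
    (hm1pos : 0 < m1) (hm0pos : 0 < m0)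
    -- θ* and the optimal classifier g*
    (θs : ℝ)
    (gstar : (Fin d → ℝ) → Bool → Bool)
    (hgstar1 : ∀ x, gstar x true = true
      ↔ 0 ≤ b1 * (2 * η x true - 1) - θs * η x true / m1)
    (hgstar0 : ∀ x, gstar x false = true
      ↔ 0 ≤ b0 * (2 * η x false - 1) + θs * η x false / m0)
    (hbalstar :
      (∫ ω, η (X ω) true * (if gstar (X ω) true then (1:ℝ) else 0)
          ∂(ProbabilityTheory.cond P {ω | S ω = true})) / m1
        = (∫ ω, η (X ω) false * (if gstar (X ω) false then (1:ℝ) else 0)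
          ∂(ProbabilityTheory.cond P {ω | S ω = false})) / m0)
    (hminstar : ∀ lam : ℝ,
      (∫ ω, max (b1 * (2 * η (X ω) true - 1) - θs * η (X ω) true / m1) 0
          ∂(ProbabilityTheory.cond P {ω | S ω = true}))
        + (∫ ω, max (b0 * (2 * η (X ω) false - 1) + θs * η (X ω) false / m0) 0
          ∂(ProbabilityTheory.cond P {ω | S ω = false}))
      ≤ (∫ ω, max (b1 * (2 * η (X ω) true - 1) - lam * η (X ω) true / m1) 0
          ∂(ProbabilityTheory.cond P {ω | S ω = true}))
        + (∫ ω, max (b0 * (2 * η (X ω) false - 1) + lam * η (X ω) false / m0) 0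
          ∂(ProbabilityTheory.cond P {ω | S ω = false})))
    -- the estimator and the pseudo-oracle
    (ηh : (Fin d → ℝ) → Bool → ℝ)
    (hηhm : Measurable (fun p : (Fin d → ℝ) × Bool => ηh p.1 p.2))
    (hηh01 : ∀ x s, ηh x s ∈ Icc (0:ℝ) 1)
    (mh1 mh0 : ℝ)
    (hmh1 : mh1 = ∫ ω, ηh (X ω) true ∂(ProbabilityTheory.cond P {ω | S ω = true}))
    (hmh0 : mh0 = ∫ ω, ηh (X ω) false ∂(ProbabilityTheory.cond P {ω | S ω = false}))
    (hmh1pos : 0 < mh1) (hmh0pos : 0 < mh0)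
    (θt : ℝ) (hθt : |θt| ≤ 2)
    (gtil : (Fin d → ℝ) → Bool → Bool)
    (hgtil1 : ∀ x, gtil x true = true
      ↔ 0 ≤ b1 * (2 * ηh x true - 1) - θt * ηh x true / mh1)
    (hgtil0 : ∀ x, gtil x false = true
      ↔ 0 ≤ b0 * (2 * ηh x false - 1) + θt * ηh x false / mh0)
    (hbaltil :
      (∫ ω, ηh (X ω) true * (if gtil (X ω) true then (1:ℝ) else 0)
          ∂(ProbabilityTheory.cond P {ω | S ω = true})) / mh1
        = (∫ ω, ηh (X ω) false * (if gtil (X ω) false then (1:ℝ) else 0)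
          ∂(ProbabilityTheory.cond P {ω | S ω = false})) / mh0) :
    (P {ω | gtil (X ω) (S ω) ≠ Y ω}).toReal - (P {ω | gstar (X ω) (S ω) ≠ Y ω}).toReal
      ≤ 4 * (∫ ω, |ηh (X ω) (S ω) - η (X ω) (S ω)| ∂P)
        + 4 * (∫ ω, |η (X ω) true - ηh (X ω) true|
            ∂(ProbabilityTheory.cond P {ω | S ω = true})) / m1
        + 4 * (∫ ω, |η (X ω) false - ηh (X ω) false|
            ∂(ProbabilityTheory.cond P {ω | S ω = false})) / m0 :=
  stmt_17_general P X S Y hX hS hY η hηm hη01 hreg b1 b0 m1 m0 hb1 hb0 hm1 hm0 hm1pos hm0pos θs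
    gstar hgstar1 hgstar0 hbalstar hminstar ηh hηhm hηh01 mh1 mh0 hmh1 hmh0 hmh1pos hmh0pos θt hθt
    gtil hgtil1 hgtil0 hbaltil
end
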